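/- arXiv:2507.16348 — 5 statements merged into one kernel-verified Lean document; each statement's English description precedes it below -/
import Mathlib

section
/- Let n ≥ 3 be an integer. If d* ∈ D maximizes W over D, i.e., W(d) ≤ W(d*) for every d ∈ D, then d*_1 > 0 and d*_{n−1} > 0. (Equivalently, the robust prize schedule awards positive prizes to all ranks 1,…,n−1, with a distinct top prize.) -/
open MeasureTheory Finset

/-- The function `a(z; d)` from the tournament model: marginal-benefit density weight. -/
noncomputable def aFun (n : ℕ) (d : ℕ → ℝ) (z : ℝ) : ℝ :=
  ∑ r ∈ Finset.Icc 1 (n - 1),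
    (r : ℝ) * ((n - 1).choose r : ℝ) * z ^ (n - r - 1) * (1 - z) ^ (r - 1) * d r

/-- The feasible set `D` of prize-differential vectors: nonnegative entries summing
(with weights `r`) to the unit budget. -/
def feasible (n : ℕ) (d : ℕ → ℝ) : Prop :=
  (∀ r ∈ Finset.Icc 1 (n - 1), 0 ≤ d r) ∧
    ∑ r ∈ Finset.Icc 1 (n - 1), (r : ℝ) * d r = 1

/-- The objective `W(d) = ∫₀¹ log a(z; d) dz`. -/
noncomputable def W (n : ℕ) (d : ℕ → ℝ) : ℝ :=
  ∫ z in (0:ℝ)..1, Real.log (aFun n d z)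

lemma my_integral_mono_ioo {f g : ℝ → ℝ} {a b : ℝ} (hab : a ≤ b)
    (hf : IntervalIntegrable f volume a b) (hg : IntervalIntegrable g volume a b)
    (h : ∀ x ∈ Set.Ioo a b, f x ≤ g x) :
    (∫ u in a..b, f u) ≤ ∫ u in a..b, g u := by
  refine intervalIntegral.integral_mono_ae_restrict hab hf hg ?_
  have h1 : ∀ᵐ x ∂(volume.restrict (Set.Icc a b)), x ∈ Set.Ioo a b := by
    rw [← Measure.restrict_congr_set Ioo_ae_eq_Icc]
    exact ae_restrict_mem measurableSet_Ioo
  filter_upwards [h1] with x hx using h x hx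

lemma my_log_int01 : IntervalIntegrable Real.log volume 0 1 := by
  have h : IntervalIntegrable (fun x : ℝ => -Real.log x) volume 0 1 := by
    apply intervalIntegral.intervalIntegrable_deriv_of_nonneg
      (g := fun x : ℝ => x - x * Real.log x)
    · exact (continuous_id.sub Real.continuous_mul_log).continuousOn
    · intro x hx
      rw [show min (0:ℝ) 1 = 0 by norm_num, show max (0:ℝ) 1 = 1 by norm_num] at hx
      have h1 : HasDerivAt (fun x : ℝ => x * Real.log x) (Real.log x + 1) x :=
        ((hasDerivAt_id x).mul (Real.hasDerivAt_log (ne_of_gt hx.1))).congr_deriv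
          (by field_simp [ne_of_gt hx.1]; simp only [id_eq]; ring)
      exact ((hasDerivAt_id x).sub h1).congr_deriv (by ring)
    · intro x hx
      rw [show min (0:ℝ) 1 = 0 by norm_num, show max (0:ℝ) 1 = 1 by norm_num] at hx
      simp only [neg_nonneg]
      exact Real.log_nonpos (le_of_lt hx.1) (le_of_lt hx.2)
  have e : (-fun x : ℝ => -Real.log x) = Real.log := by funext x; simp
  have := h.neg
  rwa [e] at this

lemma my_log_one_sub_int01 : IntervalIntegrable (fun z : ℝ => Real.log (1 - z)) volume 0 1 := by
  have := (my_log_int01.comp_sub_left 1)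
  norm_num at this
  exact this.symm

lemma aFun_cont (n : ℕ) (d : ℕ → ℝ) : Continuous (aFun n d) := by
  unfold aFun
  exact continuous_finset_sum _ (fun r _ => by fun_prop)

lemma term_nonneg (n r : ℕ) {d : ℕ → ℝ} (hd : 0 ≤ d r) {z : ℝ} (hz : z ∈ Set.Icc (0:ℝ) 1) :
    0 ≤ (r : ℝ) * ((n - 1).choose r : ℝ) * z ^ (n - r - 1) * (1 - z) ^ (r - 1) * d r := by
  obtain ⟨h0, h1⟩ := hz
  have h2 : (0:ℝ) ≤ 1 - z := by linarith
  exact mul_nonneg (mul_nonneg (mul_nonneg (mul_nonneg (Nat.cast_nonneg r)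
    (Nat.cast_nonneg _)) (pow_nonneg h0 _)) (pow_nonneg h2 _)) hd

lemma aFun_ge_term (n r0 : ℕ) (hr0 : r0 ∈ Finset.Icc 1 (n-1)) {d : ℕ → ℝ}
    (hd : ∀ r ∈ Finset.Icc 1 (n-1), 0 ≤ d r) {z : ℝ} (hz : z ∈ Set.Icc (0:ℝ) 1) :
    (r0 : ℝ) * ((n - 1).choose r0 : ℝ) * z ^ (n - r0 - 1) * (1 - z) ^ (r0 - 1) * d r0
      ≤ aFun n d z :=
  Finset.single_le_sum (fun r hr => term_nonneg n r (hd r hr) hz) hr0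

lemma aFun_nonneg (n : ℕ) {d : ℕ → ℝ} (hd : ∀ r ∈ Finset.Icc 1 (n-1), 0 ≤ d r) {z : ℝ}
    (hz : z ∈ Set.Icc (0:ℝ) 1) : 0 ≤ aFun n d z :=
  Finset.sum_nonneg (fun r hr => term_nonneg n r (hd r hr) hz)

lemma feasible_exists_pos {n : ℕ} {d : ℕ → ℝ} (hd : feasible n d) :
    ∃ r0 ∈ Finset.Icc 1 (n-1), 0 < d r0 := by
  by_contra h
  push_neg at h
  have hz : ∀ r ∈ Finset.Icc 1 (n-1), (r:ℝ) * d r = 0 := fun r hr => by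
    rw [le_antisymm (h r hr) (hd.1 r hr), mul_zero]
  have := hd.2
  rw [Finset.sum_eq_zero hz] at this
  norm_num at this

lemma aFun_pos {n : ℕ} {d : ℕ → ℝ} (hd : feasible n d) {z : ℝ} (hz : z ∈ Set.Ioo (0:ℝ) 1) :
    0 < aFun n d z := by
  obtain ⟨r0, hr0, hpos⟩ := feasible_exists_pos hd
  obtain ⟨hz0, hz1⟩ := hz
  refine lt_of_lt_of_le ?_ (aFun_ge_term n r0 hr0 hd.1 ⟨le_of_lt hz0, le_of_lt hz1⟩)
  have h1 : (0:ℝ) < r0 := by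
    have := (Finset.mem_Icc.1 hr0).1; exact_mod_cast Nat.lt_of_lt_of_le Nat.zero_lt_one this
  have h2 : (0:ℝ) < ((n-1).choose r0 : ℝ) := by
    exact_mod_cast Nat.choose_pos (Finset.mem_Icc.1 hr0).2
  have h3 : (0:ℝ) < 1 - z := by linarith
  positivity

lemma choose_le_pow2 (n r : ℕ) (hr : r ∈ Finset.Icc 1 (n-1)) :
    ((n-1).choose r : ℝ) ≤ 2^(n-1) := by
  have h1 : (n-1).choose r ≤ 2^(n-1) := by
    calc (n-1).choose r ≤ ∑ m ∈ Finset.range (n-1+1), (n-1).choose m :=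
          Finset.single_le_sum (fun m _ => Nat.zero_le _)
            (Finset.mem_range.2 (by have := (Finset.mem_Icc.1 hr).2; omega))
      _ = 2^(n-1) := Nat.sum_range_choose _
  exact_mod_cast h1

lemma aFun_upper {n : ℕ} {d : ℕ → ℝ} (hd : feasible n d) {z : ℝ} (hz : z ∈ Set.Icc (0:ℝ) 1) :
    aFun n d z ≤ 2^(n-1) := by
  obtain ⟨h0, h1⟩ := hz
  have h2 : (0:ℝ) ≤ 1 - z := by linarith
  calc aFun n d z ≤ ∑ r ∈ Finset.Icc 1 (n-1), (r:ℝ) * 2^(n-1) * d r := by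
        apply Finset.sum_le_sum
        intro r hr
        have hdr := hd.1 r hr
        have hC := choose_le_pow2 n r hr
        have hzp : z ^ (n-r-1) ≤ 1 := pow_le_one₀ h0 h1
        have hzq : (1-z) ^ (r-1) ≤ 1 := pow_le_one₀ h2 (by linarith)
        calc (r : ℝ) * ((n - 1).choose r : ℝ) * z ^ (n - r - 1) * (1 - z) ^ (r - 1) * d r
            ≤ (r : ℝ) * 2^(n-1) * 1 * 1 * d r := by
              apply mul_le_mul_of_nonneg_right _ hdr
              apply mul_le_mul _ hzq (pow_nonneg h2 _) (by positivity)
              apply mul_le_mul _ hzp (pow_nonneg h0 _) (by positivity)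
              exact mul_le_mul_of_nonneg_left hC (Nat.cast_nonneg r)
          _ = (r : ℝ) * 2^(n-1) * d r := by ring
    _ = 2^(n-1) * ∑ r ∈ Finset.Icc 1 (n-1), (r:ℝ) * d r := by
        rw [Finset.mul_sum]; exact Finset.sum_congr rfl (fun r _ => by ring)
    _ = 2^(n-1) := by rw [hd.2, mul_one]

lemma aFun_lower {n : ℕ} {d : ℕ → ℝ} (hd : feasible n d) :
    ∃ κ : ℝ, 0 < κ ∧ ∀ z ∈ Set.Ioo (0:ℝ) 1,
      κ * (z ^ (n-2) * (1-z) ^ (n-2)) ≤ aFun n d z := by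
  obtain ⟨r0, hr0, hpos⟩ := feasible_exists_pos hd
  obtain ⟨hr1, hr2⟩ := Finset.mem_Icc.1 hr0
  have hCpos : (0:ℝ) < ((n-1).choose r0 : ℝ) := by exact_mod_cast Nat.choose_pos hr2
  have hr0pos : (0:ℝ) < r0 := by exact_mod_cast hr1
  refine ⟨(r0:ℝ) * ((n-1).choose r0 : ℝ) * d r0, by positivity, ?_⟩
  intro z hz
  obtain ⟨hz0, hz1⟩ := hz
  have h1z : (0:ℝ) < 1 - z := by linarith
  have e1 : z ^ (n-2) ≤ z ^ (n-r0-1) :=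
    pow_le_pow_of_le_one (le_of_lt hz0) (by linarith) (by omega)
  have e2 : (1-z) ^ (n-2) ≤ (1-z) ^ (r0-1) :=
    pow_le_pow_of_le_one (le_of_lt h1z) (by linarith) (by omega)
  calc (r0:ℝ) * ((n-1).choose r0 : ℝ) * d r0 * (z ^ (n-2) * (1-z) ^ (n-2))
      ≤ (r0:ℝ) * ((n-1).choose r0 : ℝ) * d r0 * (z ^ (n-r0-1) * (1-z) ^ (r0-1)) := by
        apply mul_le_mul_of_nonneg_left _ (by positivity)
        exact mul_le_mul e1 e2 (by positivity) (by positivity)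
    _ = (r0 : ℝ) * ((n - 1).choose r0 : ℝ) * z ^ (n - r0 - 1) * (1 - z) ^ (r0 - 1) * d r0 := by
        ring
    _ ≤ aFun n d z := aFun_ge_term n r0 hr0 hd.1 ⟨le_of_lt hz0, le_of_lt hz1⟩

lemma log_aFun_integrable {n : ℕ} (hn : 3 ≤ n) {d : ℕ → ℝ} (hd : feasible n d) :
    IntervalIntegrable (fun z => Real.log (aFun n d z)) volume 0 1 := by
  obtain ⟨κ, hκ, hlow⟩ := aFun_lower hd
  set L : ℝ → ℝ := fun z => Real.log κ + ((n:ℝ)-2) * (Real.log z + Real.log (1-z)) with hL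
  have hLint : IntervalIntegrable L volume 0 1 :=
    intervalIntegrable_const.add ((my_log_int01.add my_log_one_sub_int01).const_mul _)
  set U : ℝ := ((n:ℝ)-1) * Real.log 2 with hU
  have hUnn : 0 ≤ U := by
    apply mul_nonneg _ (Real.log_nonneg one_le_two)
    have : (3:ℝ) ≤ (n:ℝ) := by exact_mod_cast hn
    linarith
  have hbound : ∀ z ∈ Set.Ioo (0:ℝ) 1, |Real.log (aFun n d z)| ≤ |L z| + U := by
    intro z hz
    obtain ⟨hz0, hz1⟩ := hz
    have h1z : (0:ℝ) < 1 - z := by linarith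
    have hApos : 0 < aFun n d z := aFun_pos hd ⟨hz0, hz1⟩
    have hup : Real.log (aFun n d z) ≤ U := by
      calc Real.log (aFun n d z) ≤ Real.log (2^(n-1)) :=
            Real.log_le_log hApos (aFun_upper hd ⟨le_of_lt hz0, le_of_lt hz1⟩)
        _ = ((n-1 : ℕ):ℝ) * Real.log 2 := by rw [Real.log_pow]
        _ = U := by rw [hU]; congr 1; push_cast [Nat.cast_sub (by omega : 1 ≤ n)]; ring
    have hlo : L z ≤ Real.log (aFun n d z) := by
      have : L z = Real.log (κ * (z ^ (n-2) * (1-z) ^ (n-2))) := by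
        rw [Real.log_mul (ne_of_gt hκ) (by positivity),
          Real.log_mul (by positivity) (by positivity), Real.log_pow, Real.log_pow, hL]
        push_cast [Nat.cast_sub (by omega : 2 ≤ n)]
        ring
      rw [this]
      exact Real.log_le_log (by positivity) (hlow z ⟨hz0, hz1⟩)
    rw [abs_le]
    constructor
    · have := neg_abs_le (L z); linarith
    · have := abs_nonneg (L z); linarith
  apply IntervalIntegrable.mono_fun' (g := fun z => |L z| + U)
    (hLint.abs.add intervalIntegrable_const)
  · exact ((Real.measurable_log.comp (aFun_cont n d).measurable).aestronglyMeasurable)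
  · have h1 : ∀ᵐ x ∂(volume.restrict (Set.uIoc (0:ℝ) 1)), x ∈ Set.Ioo (0:ℝ) 1 := by
      rw [Set.uIoc_of_le (by norm_num : (0:ℝ) ≤ 1),
        ← Measure.restrict_congr_set Ioo_ae_eq_Ioc]
      exact ae_restrict_mem measurableSet_Ioo
    filter_upwards [h1] with x hx
    simpa [Real.norm_eq_abs] using hbound x hx

lemma my_half_le_log {x : ℝ} (hx0 : 0 ≤ x) (hx1 : x ≤ 1) : x / 2 ≤ Real.log (1 + x) := by
  have h1 : (0:ℝ) < 1 + x := by linarith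
  have h2 : Real.log (1+x)⁻¹ ≤ (1+x)⁻¹ - 1 := Real.log_le_sub_one_of_pos (by positivity)
  rw [Real.log_inv] at h2
  have h3 : x / (1+x) ≤ Real.log (1+x) := by
    have : (1:ℝ) - (1+x)⁻¹ = x / (1+x) := by field_simp; ring
    linarith [this ▸ (by linarith : 1 - (1+x)⁻¹ ≤ Real.log (1+x))]
  have h4 : x / 2 ≤ x / (1+x) := by
    gcongr
    linarith
  linarith

set_option maxHeartbeats 1000000 in
lemma core_improve (F H : ℝ → ℝ) (M m0 : ℝ) (hM : 0 < M) (hm : 0 < m0)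
    (hF0 : ∀ z ∈ Set.Ioo (0:ℝ) 1, 0 < F z)
    (hH0 : ∀ z ∈ Set.Ioo (0:ℝ) 1, 0 ≤ H z)
    (hFup : ∀ z ∈ Set.Ioo (0:ℝ) (1/2), F z ≤ M * z)
    (hHlow : ∀ z ∈ Set.Ioo (0:ℝ) (1/2), m0 ≤ H z)
    (hintF : IntervalIntegrable (fun z => Real.log (F z)) volume 0 1)
    (hintG : ∀ t ∈ Set.Ioo (0:ℝ) 1,
      IntervalIntegrable (fun z => Real.log ((1-t) * F z + t * H z)) volume 0 1) :
    ∃ t ∈ Set.Ioo (0:ℝ) 1,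
      (∫ z in (0:ℝ)..1, Real.log (F z)) < ∫ z in (0:ℝ)..1, Real.log ((1-t) * F z + t * H z) := by
  set c := m0 / M with hc_def
  have hc : 0 < c := div_pos hm hM
  set s := min (1/2 : ℝ) (Real.exp (-(4/c)) / (2*c)) with hs_def
  have hs0 : 0 < s := lt_min (by norm_num) (by positivity)
  have hshalf : s ≤ 1/2 := min_le_left _ _
  have hexple : Real.exp (-(4/c)) ≤ 1 := by
    rw [show (1:ℝ) = Real.exp 0 from (Real.exp_zero).symm]
    apply Real.exp_le_exp.2
    have : 0 < 4/c := by positivity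
    linarith
  have hsc : s * c ≤ Real.exp (-(4/c)) / 2 := by
    have h1 := min_le_right (1/2 : ℝ) (Real.exp (-(4/c)) / (2*c))
    calc s * c ≤ (Real.exp (-(4/c)) / (2*c)) * c :=
          mul_le_mul_of_nonneg_right h1 hc.le
      _ = Real.exp (-(4/c)) / 2 := by field_simp
  have hsc1 : s * c < 1 := by linarith
  set t := s^2 with ht_def
  have ht0 : 0 < t := by positivity
  have htquarter : t ≤ 1/4 := by rw [ht_def]; nlinarith
  have ht1 : t < 1 := by linarith
  have h1t : (0:ℝ) < 1 - t := by linarith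
  have htc0 : 0 < t*c := by positivity
  have htcs : t*c < s := by
    calc t*c = s*(s*c) := by rw [ht_def]; ring
      _ < s*1 := by exact mul_lt_mul_of_pos_left hsc1 hs0
      _ = s := mul_one s
  have hs1 : s < 1 := by linarith
  clear_value c s t
  refine ⟨t, ⟨ht0, ht1⟩, ?_⟩
  set G := fun z => (1-t) * F z + t * H z with hG
  have hintGt : IntervalIntegrable (fun z => Real.log (G z)) volume 0 1 := hintG t ⟨ht0, ht1⟩
  -- pointwise fact 1
  have fact1 : ∀ z ∈ Set.Ioo (0:ℝ) 1, Real.log (F z) + Real.log (1-t) ≤ Real.log (G z) := by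
    intro z hz
    have hFz := hF0 z hz
    have hHz := hH0 z hz
    have hGz : (1-t) * F z ≤ G z := by
      have : 0 ≤ t * H z := mul_nonneg ht0.le hHz
      simp only [hG]; linarith
    calc Real.log (F z) + Real.log (1-t) = Real.log ((1-t) * F z) := by
          rw [Real.log_mul (ne_of_gt h1t) (ne_of_gt hFz)]; ring
      _ ≤ Real.log (G z) := Real.log_le_log (by positivity) hGz
  -- pointwise fact 2
  have fact2 : ∀ z ∈ Set.Ioo (t*c) s,
      Real.log (F z) + (Real.log (1-t) + t*c/(2*z)) ≤ Real.log (G z) := by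
    intro z hz
    obtain ⟨hz1, hz2⟩ := hz
    have hz0 : 0 < z := lt_trans htc0 hz1
    have hzhalf : z < 1/2 := lt_of_lt_of_le hz2 hshalf
    have hzIoo : z ∈ Set.Ioo (0:ℝ) 1 := ⟨hz0, by linarith⟩
    have hFz := hF0 z hzIoo
    have hFzup := hFup z ⟨hz0, hzhalf⟩
    have hHzlow := hHlow z ⟨hz0, hzhalf⟩
    set x := t*c/z with hx
    have hx0 : 0 < x := by positivity
    have hx1 : x ≤ 1 := by rw [hx, div_le_one hz0]; linarith
    have key : (1-t) * F z * (1+x) ≤ G z := by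
      have e0 : F z * x ≤ M * z * x := mul_le_mul_of_nonneg_right hFzup hx0.le
      have e2 : M * z * x = t * (M * c) := by rw [hx]; field_simp
      have e3 : M * c = m0 := by rw [hc_def]; field_simp
      have e1 : (1-t) * F z * x ≤ t * m0 := by
        have e5 : (1-t) * (F z * x) ≤ F z * x := by nlinarith [mul_nonneg hFz.le hx0.le]
        nlinarith
      have e4 : t * m0 ≤ t * H z := mul_le_mul_of_nonneg_left hHzlow ht0.le
      calc (1-t) * F z * (1+x) = (1-t) * F z + (1-t) * F z * x := by ring
        _ ≤ (1-t) * F z + t * m0 := by linarith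
        _ ≤ G z := by simp only [hG]; linarith
    have hlog1x : x/2 ≤ Real.log (1+x) := my_half_le_log hx0.le hx1
    have exq : t*c/(2*z) = x/2 := by rw [hx]; ring
    calc Real.log (F z) + (Real.log (1-t) + t*c/(2*z))
        ≤ Real.log (F z) + Real.log (1-t) + Real.log (1+x) := by rw [exq]; linarith
      _ = Real.log ((1-t) * F z * (1+x)) := by
          rw [Real.log_mul (by positivity) (by positivity),
            Real.log_mul (ne_of_gt h1t) (ne_of_gt hFz)]; ring
      _ ≤ Real.log (G z) := Real.log_le_log (by positivity) key
  -- piecewise integrability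
  have hsub1 : Set.uIcc (0:ℝ) (t*c) ⊆ Set.uIcc (0:ℝ) 1 := by
    rw [Set.uIcc_of_le htc0.le, Set.uIcc_of_le (by norm_num : (0:ℝ) ≤ 1)]
    exact Set.Icc_subset_Icc (le_refl _) (by linarith)
  have hsub2 : Set.uIcc (t*c) s ⊆ Set.uIcc (0:ℝ) 1 := by
    rw [Set.uIcc_of_le htcs.le, Set.uIcc_of_le (by norm_num : (0:ℝ) ≤ 1)]
    exact Set.Icc_subset_Icc htc0.le (by linarith)
  have hsub3 : Set.uIcc s (1:ℝ) ⊆ Set.uIcc (0:ℝ) 1 := by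
    rw [Set.uIcc_of_le hs1.le, Set.uIcc_of_le (by norm_num : (0:ℝ) ≤ 1)]
    exact Set.Icc_subset_Icc hs0.le (le_refl _)
  have hsub4 : Set.uIcc (0:ℝ) s ⊆ Set.uIcc (0:ℝ) 1 := by
    rw [Set.uIcc_of_le hs0.le, Set.uIcc_of_le (by norm_num : (0:ℝ) ≤ 1)]
    exact Set.Icc_subset_Icc (le_refl _) hs1.le
  have hiF1 := hintF.mono_set hsub1
  have hiF2 := hintF.mono_set hsub2
  have hiF3 := hintF.mono_set hsub3
  have hiF4 := hintF.mono_set hsub4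
  have hiG1 := hintGt.mono_set hsub1
  have hiG2 := hintGt.mono_set hsub2
  have hiG3 := hintGt.mono_set hsub3
  have hiG4 := hintGt.mono_set hsub4
  have hiq : IntervalIntegrable (fun z => t*c/(2*z)) volume (t*c) s := by
    apply ContinuousOn.intervalIntegrable
    apply ContinuousOn.div continuousOn_const (by fun_prop)
    intro x hx
    rw [Set.uIcc_of_le htcs.le] at hx
    have hxp : 0 < x := lt_of_lt_of_le htc0 hx.1
    positivity
  -- the three inequalities
  have P1 : (∫ z in (0:ℝ)..(t*c), Real.log (F z)) + (t*c) * Real.log (1-t)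
      ≤ ∫ z in (0:ℝ)..(t*c), Real.log (G z) := by
    have := my_integral_mono_ioo htc0.le (hiF1.add (intervalIntegrable_const (c := Real.log (1-t)))) hiG1
      (fun z hz => fact1 z ⟨hz.1, lt_trans hz.2 (lt_trans htcs hs1)⟩)
    rw [intervalIntegral.integral_add hiF1 intervalIntegrable_const,
      intervalIntegral.integral_const, smul_eq_mul] at this
    linarith
  have P3 : (∫ z in s..(1:ℝ), Real.log (F z)) + (1-s) * Real.log (1-t)
      ≤ ∫ z in s..(1:ℝ), Real.log (G z) := by
    have := my_integral_mono_ioo hs1.le (hiF3.add (intervalIntegrable_const (c := Real.log (1-t)))) hiG3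
      (fun z hz => fact1 z ⟨lt_trans hs0 hz.1, hz.2⟩)
    rw [intervalIntegral.integral_add hiF3 intervalIntegrable_const,
      intervalIntegral.integral_const, smul_eq_mul] at this
    linarith
  have h0notin : (0:ℝ) ∉ Set.uIcc (t*c) s := by
    rw [Set.uIcc_of_le htcs.le]
    rintro ⟨ha, hb⟩
    linarith
  have P2 : (∫ z in (t*c)..s, Real.log (F z)) + (s - t*c) * Real.log (1-t)
        + (t*c/2) * Real.log (s/(t*c))
      ≤ ∫ z in (t*c)..s, Real.log (G z) := by
    have hmono := my_integral_mono_ioo htcs.le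
      ((hiF2.add (intervalIntegrable_const (c := Real.log (1-t)))).add hiq) hiG2
      (fun z hz => by
        have h2 := fact2 z hz
        linarith)
    have eq2 : (∫ z in (t*c)..s, t*c/(2*z)) = (t*c/2) * Real.log (s/(t*c)) := by
      have e : ∀ z : ℝ, t*c/(2*z) = (t*c/2)*(1/z) := fun z => by ring
      simp_rw [e]
      rw [intervalIntegral.integral_const_mul, integral_one_div h0notin]
    have eq1 : (∫ z in (t*c)..s, ((Real.log (F z) + Real.log (1-t)) + t*c/(2*z)))
        = (∫ z in (t*c)..s, Real.log (F z)) + (s - t*c) * Real.log (1-t)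
          + (t*c/2) * Real.log (s/(t*c)) := by
      rw [intervalIntegral.integral_add (hiF2.add intervalIntegrable_const) hiq,
        intervalIntegral.integral_add hiF2 intervalIntegrable_const,
        intervalIntegral.integral_const, smul_eq_mul, eq2]
    rw [eq1] at hmono
    exact hmono
  -- splitting
  have hsplitF1 : (∫ z in (0:ℝ)..(t*c), Real.log (F z)) + (∫ z in (t*c)..s, Real.log (F z))
      = ∫ z in (0:ℝ)..s, Real.log (F z) :=
    intervalIntegral.integral_add_adjacent_intervals hiF1 hiF2
  have hsplitF2 : (∫ z in (0:ℝ)..s, Real.log (F z)) + (∫ z in s..(1:ℝ), Real.log (F z))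
      = ∫ z in (0:ℝ)..1, Real.log (F z) :=
    intervalIntegral.integral_add_adjacent_intervals hiF4 hiF3
  have hsplitG1 : (∫ z in (0:ℝ)..(t*c), Real.log (G z)) + (∫ z in (t*c)..s, Real.log (G z))
      = ∫ z in (0:ℝ)..s, Real.log (G z) :=
    intervalIntegral.integral_add_adjacent_intervals hiG1 hiG2
  have hsplitG2 : (∫ z in (0:ℝ)..s, Real.log (G z)) + (∫ z in s..(1:ℝ), Real.log (G z))
      = ∫ z in (0:ℝ)..1, Real.log (G z) :=
    intervalIntegral.integral_add_adjacent_intervals hiG4 hiG3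
  -- final positivity
  have hfinal : 0 < Real.log (1-t) + (t*c/2) * Real.log (s/(t*c)) := by
    have e1 : s/(t*c) = 1/(s*c) := by
      rw [ht_def]
      field_simp
    have e2 : Real.log (s/(t*c)) = -Real.log (s*c) := by rw [e1, one_div, Real.log_inv]
    have h3 : Real.log (s*c) ≤ -(4/c) - Real.log 2 := by
      calc Real.log (s*c) ≤ Real.log (Real.exp (-(4/c))/2) :=
            Real.log_le_log (by positivity) hsc
        _ = -(4/c) - Real.log 2 := by
            rw [Real.log_div (Real.exp_ne_zero _) (by norm_num), Real.log_exp]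
    have h4 : 4/c < -Real.log (s*c) := by
      have : 0 < Real.log 2 := Real.log_pos one_lt_two
      linarith
    have h5 : 2*t < (t*c/2) * (-Real.log (s*c)) := by
      have h6 := mul_lt_mul_of_pos_left h4 (by positivity : (0:ℝ) < t*c/2)
      calc 2*t = (t*c/2) * (4/c) := by field_simp; ring
        _ < _ := h6
    have h6 : -Real.log (1-t) ≤ 2*t := by
      have h7 : Real.log (1-t)⁻¹ ≤ (1-t)⁻¹ - 1 := Real.log_le_sub_one_of_pos (by positivity)
      rw [Real.log_inv] at h7
      have h8 : (1-t)⁻¹ - 1 = t/(1-t) := by field_simp; ring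
      have h9 : t/(1-t) ≤ 2*t := by
        rw [div_le_iff₀ h1t]
        have key : 0 ≤ t * (1 - 2*t) := mul_nonneg ht0.le (by linarith)
        nlinarith [key]
      linarith
    rw [e2]
    linarith
  linarith

lemma aFun_blend (n : ℕ) (d e : ℕ → ℝ) (t z : ℝ) :
    aFun n (fun r => (1-t) * d r + t * e r) z = (1-t) * aFun n d z + t * aFun n e z := by
  unfold aFun
  rw [Finset.mul_sum, Finset.mul_sum, ← Finset.sum_add_distrib]
  exact Finset.sum_congr rfl (fun r _ => by ring)

lemma feasible_blend {n : ℕ} {d e : ℕ → ℝ} (hd : feasible n d) (he : feasible n e)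
    {t : ℝ} (ht0 : 0 ≤ t) (ht1 : t ≤ 1) :
    feasible n (fun r => (1-t) * d r + t * e r) := by
  constructor
  · intro r hr
    have h1 := hd.1 r hr
    have h2 := he.1 r hr
    have := add_nonneg (mul_nonneg (by linarith : (0:ℝ) ≤ 1-t) h1) (mul_nonneg ht0 h2)
    simpa using this
  · have h : ∀ r ∈ Finset.Icc 1 (n-1),
        (r:ℝ) * ((1-t)*d r + t*e r) = (1-t)*((r:ℝ)*d r) + t*((r:ℝ)*e r) :=
      fun r _ => by ring
    rw [Finset.sum_congr rfl h, Finset.sum_add_distrib, ← Finset.mul_sum, ← Finset.mul_sum,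
      hd.2, he.2]
    ring

lemma aFun_upper_top {n : ℕ} {d : ℕ → ℝ} (hd : feasible n d) (h0 : d (n-1) = 0)
    {z : ℝ} (hz : z ∈ Set.Icc (0:ℝ) 1) : aFun n d z ≤ 2^(n-1) * z := by
  obtain ⟨hz0, hz1⟩ := hz
  have h2 : (0:ℝ) ≤ 1 - z := by linarith
  calc aFun n d z ≤ ∑ r ∈ Finset.Icc 1 (n-1), ((r:ℝ) * 2^(n-1) * d r) * z := by
        apply Finset.sum_le_sum
        intro r hr
        rcases eq_or_ne r (n-1) with h | h
        · rw [h, h0]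
          simp
        · have hrn : n - r - 1 ≠ 0 := by
            have := Finset.mem_Icc.1 hr
            omega
          have hdr := hd.1 r hr
          have hC := choose_le_pow2 n r hr
          have hzp : z ^ (n-r-1) ≤ z := pow_le_of_le_one hz0 hz1 hrn
          have hzq : (1-z) ^ (r-1) ≤ 1 := pow_le_one₀ h2 (by linarith)
          calc (r : ℝ) * ((n - 1).choose r : ℝ) * z ^ (n - r - 1) * (1 - z) ^ (r - 1) * d r
              ≤ (r : ℝ) * 2^(n-1) * z * 1 * d r := by
                apply mul_le_mul_of_nonneg_right _ hdr
                apply mul_le_mul _ hzq (pow_nonneg h2 _) (by positivity)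
                apply mul_le_mul _ hzp (pow_nonneg hz0 _) (by positivity)
                exact mul_le_mul_of_nonneg_left hC (Nat.cast_nonneg r)
            _ = ((r : ℝ) * 2^(n-1) * d r) * z := by ring
    _ = (2^(n-1) * ∑ r ∈ Finset.Icc 1 (n-1), (r:ℝ) * d r) * z := by
        rw [Finset.mul_sum, Finset.sum_mul]
        exact Finset.sum_congr rfl (fun r _ => by ring)
    _ = 2^(n-1) * z := by rw [hd.2, mul_one]

lemma aFun_upper_bot {n : ℕ} {d : ℕ → ℝ} (hd : feasible n d) (h0 : d 1 = 0)
    {z : ℝ} (hz : z ∈ Set.Icc (0:ℝ) 1) : aFun n d z ≤ 2^(n-1) * (1-z) := by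
  obtain ⟨hz0, hz1⟩ := hz
  have h2 : (0:ℝ) ≤ 1 - z := by linarith
  calc aFun n d z ≤ ∑ r ∈ Finset.Icc 1 (n-1), ((r:ℝ) * 2^(n-1) * d r) * (1-z) := by
        apply Finset.sum_le_sum
        intro r hr
        rcases eq_or_ne r 1 with h | h
        · rw [h, h0]
          simp
        · have hrn : r - 1 ≠ 0 := by
            have := Finset.mem_Icc.1 hr
            omega
          have hdr := hd.1 r hr
          have hC := choose_le_pow2 n r hr
          have hzp : z ^ (n-r-1) ≤ 1 := pow_le_one₀ hz0 hz1
          have hzq : (1-z) ^ (r-1) ≤ 1-z := pow_le_of_le_one h2 (by linarith) hrn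
          calc (r : ℝ) * ((n - 1).choose r : ℝ) * z ^ (n - r - 1) * (1 - z) ^ (r - 1) * d r
              ≤ (r : ℝ) * 2^(n-1) * 1 * (1-z) * d r := by
                apply mul_le_mul_of_nonneg_right _ hdr
                apply mul_le_mul _ hzq (pow_nonneg h2 _) (by positivity)
                apply mul_le_mul _ hzp (pow_nonneg hz0 _) (by positivity)
                exact mul_le_mul_of_nonneg_left hC (Nat.cast_nonneg r)
            _ = ((r : ℝ) * 2^(n-1) * d r) * (1-z) := by ring
    _ = (2^(n-1) * ∑ r ∈ Finset.Icc 1 (n-1), (r:ℝ) * d r) * (1-z) := by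
        rw [Finset.mul_sum, Finset.sum_mul]
        exact Finset.sum_congr rfl (fun r _ => by ring)
    _ = 2^(n-1) * (1-z) := by rw [hd.2, mul_one]

set_option maxHeartbeats 1000000 in
/-- For `n ≥ 3`, any maximizer `d*` of `W` over `D` has `d*_1 > 0` and
`d*_{n-1} > 0`. -/
theorem robust_prizes_positive_top_and_bottom
    (n : ℕ) (hn : 3 ≤ n) (dstar : ℕ → ℝ) (hfeas : feasible n dstar)
    (hmax : ∀ d : ℕ → ℝ, feasible n d → W n d ≤ W n dstar) :
    0 < dstar 1 ∧ 0 < dstar (n - 1) := by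
  have h1mem : 1 ∈ Finset.Icc 1 (n-1) := Finset.mem_Icc.2 ⟨le_refl 1, by omega⟩
  have hn1mem : n-1 ∈ Finset.Icc 1 (n-1) := Finset.mem_Icc.2 ⟨by omega, le_refl _⟩
  have hM : (0:ℝ) < 2^(n-1) := by positivity
  have hm : (0:ℝ) < ((1:ℝ)/2)^(n-2) := by positivity
  constructor
  · -- d*_1 > 0, via reflection z ↦ 1 - z
    by_contra hcon
    push_neg at hcon
    have hd1 : dstar 1 = 0 := le_antisymm hcon (hfeas.1 1 h1mem)
    set e : ℕ → ℝ := fun r => if r = 1 then 1 else 0 with he_def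
    have hefeas : feasible n e := by
      constructor
      · intro r _
        by_cases h : r = 1 <;> simp [he_def, h]
      · rw [Finset.sum_eq_single_of_mem 1 h1mem (fun b _ hb => by simp [he_def, hb])]
        simp [he_def]
    have hintF : IntervalIntegrable (fun z => Real.log (aFun n dstar (1-z))) volume 0 1 := by
      have h1 := (log_aFun_integrable hn hfeas).comp_sub_left 1
      norm_num at h1
      exact h1.symm
    have hintG : ∀ t ∈ Set.Ioo (0:ℝ) 1, IntervalIntegrable
        (fun z => Real.log ((1-t) * aFun n dstar (1-z) + t * aFun n e (1-z))) volume 0 1 := by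
      intro t ht
      have hbf : feasible n (fun r => (1-t)*dstar r + t*e r) :=
        feasible_blend hfeas hefeas ht.1.le ht.2.le
      have h2 := (log_aFun_integrable hn hbf).comp_sub_left 1
      norm_num at h2
      have he2 : (fun z => Real.log ((1-t) * aFun n dstar (1-z) + t * aFun n e (1-z)))
          = fun z => Real.log (aFun n (fun r => (1-t)*dstar r + t*e r) (1-z)) := by
        funext z
        rw [aFun_blend]
      rw [he2]
      exact h2.symm
    obtain ⟨t, ⟨ht0, ht1⟩, hlt⟩ := core_improve
      (fun z => aFun n dstar (1-z)) (fun z => aFun n e (1-z))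
      (2^(n-1)) (((1:ℝ)/2)^(n-2)) hM hm
      (fun z hz => aFun_pos hfeas ⟨by linarith [hz.2], by linarith [hz.1]⟩)
      (fun z hz => aFun_nonneg n hefeas.1 ⟨by linarith [hz.2], by linarith [hz.1]⟩)
      (fun z hz => by
        have hw : (1-z) ∈ Set.Icc (0:ℝ) 1 := ⟨by linarith [hz.2], by linarith [hz.1]⟩
        have h3 := aFun_upper_bot hfeas hd1 hw
        calc aFun n dstar (1-z) ≤ 2^(n-1) * (1-(1-z)) := h3
          _ = 2^(n-1) * z := by ring)
      (fun z hz => by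
        have hw : (1-z) ∈ Set.Icc (0:ℝ) 1 := ⟨by linarith [hz.2], by linarith [hz.1]⟩
        have hterm := aFun_ge_term n 1 h1mem hefeas.1 hw
        have hE : e 1 = 1 := by simp [he_def]
        simp only [hE, Nat.cast_one, one_mul, mul_one, Nat.choose_one_right, Nat.sub_self,
          pow_zero, show n-1-1 = n-2 from by omega] at hterm
        have hone : (1:ℝ) ≤ ((n-1:ℕ):ℝ) := by
          have : 1 ≤ n-1 := by omega
          exact_mod_cast this
        have hp : ((1:ℝ)/2)^(n-2) ≤ (1-z)^(n-2) :=
          pow_le_pow_left₀ (by norm_num) (by linarith [hz.2]) _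
        have hnn : (0:ℝ) ≤ (1-z)^(n-2) := pow_nonneg (by linarith [hz.2]) _
        calc ((1:ℝ)/2)^(n-2) ≤ (1-z)^(n-2) := hp
          _ ≤ ((n-1:ℕ):ℝ) * (1-z)^(n-2) := by nlinarith
          _ ≤ aFun n e (1-z) := hterm)
      hintF hintG
    have hbf : feasible n (fun r => (1-t)*dstar r + t*e r) :=
      feasible_blend hfeas hefeas ht0.le ht1.le
    have hrefl1 : (∫ z in (0:ℝ)..1, Real.log (aFun n dstar (1-z))) = W n dstar := by
      have h4 := intervalIntegral.integral_comp_sub_left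
        (a := (0:ℝ)) (b := 1) (fun z => Real.log (aFun n dstar z)) 1
      norm_num at h4
      rw [h4]
      rfl
    have hrefl2 : (∫ z in (0:ℝ)..1, Real.log ((1-t) * aFun n dstar (1-z) + t * aFun n e (1-z)))
        = W n (fun r => (1-t)*dstar r + t*e r) := by
      have he2 : (fun z => Real.log ((1-t) * aFun n dstar (1-z) + t * aFun n e (1-z)))
          = fun z => Real.log (aFun n (fun r => (1-t)*dstar r + t*e r) (1-z)) := by
        funext z
        rw [aFun_blend]
      rw [he2]
      have h4 := intervalIntegral.integral_comp_sub_left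
        (a := (0:ℝ)) (b := 1) (fun z => Real.log (aFun n (fun r => (1-t)*dstar r + t*e r) z)) 1
      norm_num at h4
      rw [h4]
      rfl
    rw [hrefl1, hrefl2] at hlt
    have := hmax _ hbf
    linarith
  · -- d*_{n-1} > 0, direct
    by_contra hcon
    push_neg at hcon
    have hdtop : dstar (n-1) = 0 := le_antisymm hcon (hfeas.1 _ hn1mem)
    have hn1R : (0:ℝ) < ((n-1:ℕ):ℝ) := by
      have : 0 < n-1 := by omega
      exact_mod_cast this
    set e : ℕ → ℝ := fun r => if r = n-1 then ((n-1:ℕ):ℝ)⁻¹ else 0 with he_def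
    have hefeas : feasible n e := by
      constructor
      · intro r _
        by_cases h : r = n-1 <;> simp [he_def, h]
      · rw [Finset.sum_eq_single_of_mem (n-1) hn1mem (fun b _ hb => by simp [he_def, hb])]
        have hE : e (n-1) = ((n-1:ℕ):ℝ)⁻¹ := by simp [he_def]
        rw [hE, mul_inv_cancel₀ (ne_of_gt hn1R)]
    have hintG : ∀ t ∈ Set.Ioo (0:ℝ) 1, IntervalIntegrable
        (fun z => Real.log ((1-t) * aFun n dstar z + t * aFun n e z)) volume 0 1 := by
      intro t ht
      have hbf : feasible n (fun r => (1-t)*dstar r + t*e r) :=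
        feasible_blend hfeas hefeas ht.1.le ht.2.le
      have he2 : (fun z => Real.log ((1-t) * aFun n dstar z + t * aFun n e z))
          = fun z => Real.log (aFun n (fun r => (1-t)*dstar r + t*e r) z) := by
        funext z
        rw [aFun_blend]
      rw [he2]
      exact log_aFun_integrable hn hbf
    obtain ⟨t, ⟨ht0, ht1⟩, hlt⟩ := core_improve
      (aFun n dstar) (aFun n e) (2^(n-1)) (((1:ℝ)/2)^(n-2)) hM hm
      (fun z hz => aFun_pos hfeas hz)
      (fun z hz => aFun_nonneg n hefeas.1 ⟨hz.1.le, hz.2.le⟩)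
      (fun z hz => aFun_upper_top hfeas hdtop ⟨hz.1.le, by linarith [hz.2]⟩)
      (fun z hz => by
        have hw : z ∈ Set.Icc (0:ℝ) 1 := ⟨hz.1.le, by linarith [hz.2]⟩
        have hterm := aFun_ge_term n (n-1) hn1mem hefeas.1 hw
        have hE : e (n-1) = ((n-1:ℕ):ℝ)⁻¹ := by simp [he_def]
        simp only [hE, Nat.choose_self, Nat.cast_one, mul_one, one_mul,
          show n-(n-1)-1 = 0 from by omega, pow_zero] at hterm
        have heq : ((n-1:ℕ):ℝ) * (1-z)^(n-1-1) * ((n-1:ℕ):ℝ)⁻¹ = (1-z)^(n-2) := by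
          rw [show n-1-1 = n-2 from by omega, mul_comm ((n-1:ℕ):ℝ) ((1-z)^(n-2)), mul_assoc,
            mul_inv_cancel₀ (ne_of_gt hn1R), mul_one]
        rw [heq] at hterm
        have hp : ((1:ℝ)/2)^(n-2) ≤ (1-z)^(n-2) :=
          pow_le_pow_left₀ (by norm_num) (by linarith [hz.2]) _
        linarith)
      (log_aFun_integrable hn hfeas) hintG
    have hbf : feasible n (fun r => (1-t)*dstar r + t*e r) :=
      feasible_blend hfeas hefeas ht0.le ht1.le
    have heqW : (∫ z in (0:ℝ)..1, Real.log ((1-t) * aFun n dstar z + t * aFun n e z))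
        = W n (fun r => (1-t)*dstar r + t*e r) := by
      have he2 : (fun z => Real.log ((1-t) * aFun n dstar z + t * aFun n e z))
          = fun z => Real.log (aFun n (fun r => (1-t)*dstar r + t*e r) z) := by
        funext z
        rw [aFun_blend]
      rw [he2]
      rfl
    rw [heqW] at hlt
    have := hmax _ hbf
    have hWd : W n dstar = ∫ z in (0:ℝ)..1, Real.log (aFun n dstar z) := rfl
    linarith [hlt, this, hWd ▸ this]
end

section
/- Let n = 3. If d* = (d*_1, d*_2) ∈ D maximizes W over D, then d*_1 > 0 and d*_2 > 0; that is, the robust tournament with three players awards strictly decreasing prizes v_1 > v_2 > v_3 = 0. -/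
open MeasureTheory Finset

/-- Prizes recovered from prize differentials: `v_r = Σ_{k=r}^{n-1} d_k`. -/
noncomputable def prize (n : ℕ) (d : ℕ → ℝ) (r : ℕ) : ℝ :=
  ∑ k ∈ Finset.Icc r (n - 1), d k

open intervalIntegral

lemma sum_Icc12 (f : ℕ → ℝ) : ∑ r ∈ Finset.Icc 1 2, f r = f 1 + f 2 := by
  rw [show Finset.Icc 1 2 = {1, 2} from rfl]
  simp

lemma aFun3 (d : ℕ → ℝ) (z : ℝ) : aFun 3 d z = 2*z*d 1 + 2*(1-z)*d 2 := by
  rw [aFun, show (3:ℕ) - 1 = 2 from rfl, sum_Icc12]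
  norm_num

lemma abs_log_le {x : ℝ} (hx : 0 < x) (hx1 : x ≤ 1) : |Real.log x| ≤ 2 * x ^ (-(1:ℝ)/2) := by
  rw [abs_of_nonpos (Real.log_nonpos hx.le hx1)]
  have h := Real.log_le_sub_one_of_pos (x := x ^ (-(1:ℝ)/2)) (by positivity)
  rw [Real.log_rpow hx] at h
  nlinarith [Real.rpow_nonneg hx.le (-(1:ℝ)/2)]

lemma intlog2z : IntervalIntegrable (fun z : ℝ => Real.log (2*z)) volume 0 1 := by
  have hg : IntervalIntegrable (fun z : ℝ => 1 + 2 * z ^ (-(1:ℝ)/2)) volume 0 1 :=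
    intervalIntegrable_const.add ((intervalIntegrable_rpow' (by norm_num)).const_mul 2)
  refine hg.mono_fun' ?_ ?_
  · exact (Real.measurable_log.comp (measurable_const_mul 2)).aestronglyMeasurable
  · rw [Set.uIoc_of_le (by norm_num : (0:ℝ) ≤ 1)]
    filter_upwards [ae_restrict_mem measurableSet_Ioc] with z hz
    obtain ⟨hz0, hz1⟩ := hz
    have : Real.log (2*z) = Real.log 2 + Real.log z := Real.log_mul (by norm_num) (ne_of_gt hz0)
    calc ‖Real.log (2*z)‖ = |Real.log 2 + Real.log z| := by rw [this]; rfl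
      _ ≤ |Real.log 2| + |Real.log z| := abs_add_le _ _
      _ ≤ 1 + 2 * z ^ (-(1:ℝ)/2) := by
          gcongr
          · rw [abs_of_nonneg (Real.log_nonneg (by norm_num))]
            nlinarith [Real.log_two_lt_d9]
          · exact abs_log_le hz0 hz1

lemma intlog1mz : IntervalIntegrable (fun z : ℝ => Real.log (1-z)) volume 0 1 := by
  have hg0 : IntervalIntegrable (fun z : ℝ => 2 * z ^ (-(1:ℝ)/2)) volume 0 1 :=
    (intervalIntegrable_rpow' (by norm_num)).const_mul 2
  have hg : IntervalIntegrable (fun z : ℝ => 2 * (1-z) ^ (-(1:ℝ)/2)) volume 0 1 := by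
    have := (hg0.comp_sub_left 1).symm
    simpa using this
  refine hg.mono_fun' ?_ ?_
  · exact (Real.measurable_log.comp (measurable_const.sub measurable_id)).aestronglyMeasurable
  · rw [Set.uIoc_of_le (by norm_num : (0:ℝ) ≤ 1)]
    filter_upwards [ae_restrict_mem measurableSet_Ioc] with z hz
    obtain ⟨hz0, hz1⟩ := hz
    rcases eq_or_lt_of_le hz1 with h1 | h1
    · subst h1
      norm_num [Real.log_zero]
    · have h0 : 0 < 1 - z := by linarith
      have := abs_log_le h0 (by linarith)
      simpa using this

lemma uIcc01 : Set.uIcc (0:ℝ) 1 = Set.Icc 0 1 := Set.uIcc_of_le (by norm_num)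

lemma intA_val : (∫ z in (0:ℝ)..1, (18*z/(1+15*z) - 1)) = 1/5 - (8/25)*Real.log 2 := by
  have hne : ∀ z ∈ Set.uIcc (0:ℝ) 1, (1:ℝ)+15*z ≠ 0 := by
    intro z hz; rw [uIcc01] at hz; have := hz.1; positivity
  have hint : IntervalIntegrable (fun z : ℝ => 18*z/(1+15*z) - 1) volume 0 1 := by
    apply ContinuousOn.intervalIntegrable
    exact ((continuousOn_const.mul continuousOn_id).div (by fun_prop) hne).sub continuousOn_const
  have hderiv : ∀ z ∈ Set.uIcc (0:ℝ) 1,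
      HasDerivAt (fun z : ℝ => z/5 - (2/25)*Real.log (1+15*z)) (18*z/(1+15*z) - 1) z := by
    intro z hz
    have hd : (1:ℝ)+15*z ≠ 0 := hne z hz
    have hl : HasDerivAt (fun z : ℝ => 1+15*z) 15 z := by
      simpa using ((hasDerivAt_id z).const_mul 15).const_add 1
    have hlog : HasDerivAt (fun z : ℝ => Real.log (1+15*z)) (15/(1+15*z)) z := hl.log hd
    have := ((hasDerivAt_id z).div_const 5).sub (hlog.const_mul (2/25))
    refine this.congr_deriv ?_
    field_simp
    ring
  rw [integral_eq_sub_of_hasDerivAt hderiv hint]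
  norm_num
  rw [show (16:ℝ) = 2^4 by norm_num, Real.log_pow]
  push_cast; ring

lemma intB_val : (∫ z in (0:ℝ)..1, (2*(1-z)/(1+z) - 1)) = 4*Real.log 2 - 3 := by
  have hne : ∀ z ∈ Set.uIcc (0:ℝ) 1, (1:ℝ)+z ≠ 0 := by
    intro z hz; rw [uIcc01] at hz; have := hz.1; positivity
  have hint : IntervalIntegrable (fun z : ℝ => 2*(1-z)/(1+z) - 1) volume 0 1 := by
    apply ContinuousOn.intervalIntegrable
    exact ((continuousOn_const.mul (continuousOn_const.sub continuousOn_id)).div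
      (by fun_prop) hne).sub continuousOn_const
  have hderiv : ∀ z ∈ Set.uIcc (0:ℝ) 1,
      HasDerivAt (fun z : ℝ => 4*Real.log (1+z) - 3*z) (2*(1-z)/(1+z) - 1) z := by
    intro z hz
    have hd : (1:ℝ)+z ≠ 0 := hne z hz
    have hl : HasDerivAt (fun z : ℝ => 1+z) 1 z := by
      simpa using (hasDerivAt_id z).const_add 1
    have hlog : HasDerivAt (fun z : ℝ => Real.log (1+z)) (1/(1+z)) z := hl.log hd
    have := (hlog.const_mul 4).sub ((hasDerivAt_id z).const_mul 3)
    refine this.congr_deriv ?_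
    field_simp
    ring
  rw [integral_eq_sub_of_hasDerivAt hderiv hint]
  norm_num

/-- candidate comparison point for the case `d 2 = 0`. -/
noncomputable def dA : ℕ → ℝ := fun r => if r = 1 then 8/9 else if r = 2 then 1/18 else 0

/-- candidate comparison point for the case `d 1 = 0`. -/
noncomputable def dB : ℕ → ℝ := fun r => if r = 1 then 1/2 else if r = 2 then 1/4 else 0

lemma feasible_dA : feasible 3 dA := by
  constructor
  · intro r _; simp only [dA]; split_ifs <;> norm_num
  · rw [show (3:ℕ) - 1 = 2 from rfl, sum_Icc12]
    norm_num [dA]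

lemma feasible_dB : feasible 3 dB := by
  constructor
  · intro r _; simp only [dB]; split_ifs <;> norm_num
  · rw [show (3:ℕ) - 1 = 2 from rfl, sum_Icc12]
    norm_num [dB]

lemma ae_ne_restrict (c : ℝ) (s : Set ℝ) :
    ∀ᵐ z ∂(volume.restrict s), z ≠ c := by
  apply ae_restrict_of_ae
  rw [ae_iff]
  simp only [ne_eq, not_not, Set.setOf_eq_eq_singleton]
  exact measure_singleton c

lemma caseA (d : ℕ → ℝ) (h1 : d 1 = 1) (h2 : d 2 = 0) : W 3 d < W 3 dA := by
  have hWd : W 3 d = ∫ z in (0:ℝ)..1, Real.log (2*z) := by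
    rw [W]
    apply integral_congr
    intro z _
    simp only [aFun3, h1, h2]
    ring_nf
  have hWA : W 3 dA = ∫ z in (0:ℝ)..1, Real.log ((1+15*z)/9) := by
    rw [W]
    apply integral_congr
    intro z _
    simp only [aFun3]
    congr 1
    norm_num [dA]
    ring
  have hne : ∀ z ∈ Set.uIcc (0:ℝ) 1, (1:ℝ)+15*z ≠ 0 := by
    intro z hz; rw [uIcc01] at hz; have := hz.1; positivity
  have hc1 : IntervalIntegrable (fun z : ℝ => Real.log ((1+15*z)/9)) volume 0 1 := by
    apply ContinuousOn.intervalIntegrable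
    apply ContinuousOn.log (by fun_prop)
    intro z hz
    have := hne z hz
    rw [uIcc01] at hz
    have := hz.1
    positivity
  have hc2 : IntervalIntegrable (fun z : ℝ => 18*z/(1+15*z) - 1) volume 0 1 := by
    apply ContinuousOn.intervalIntegrable
    exact ((continuousOn_const.mul continuousOn_id).div (by fun_prop) hne).sub continuousOn_const
  have hg : IntervalIntegrable
      (fun z : ℝ => Real.log ((1+15*z)/9) + (18*z/(1+15*z) - 1)) volume 0 1 := hc1.add hc2
  have hmono : (∫ z in (0:ℝ)..1, Real.log (2*z)) ≤
      ∫ z in (0:ℝ)..1, (Real.log ((1+15*z)/9) + (18*z/(1+15*z) - 1)) := by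
    apply integral_mono_ae_restrict (by norm_num) intlog2z hg
    filter_upwards [ae_ne_restrict 0 _, ae_restrict_mem measurableSet_Icc] with z hz0 hzI
    have hzpos : 0 < z := lt_of_le_of_ne hzI.1 (Ne.symm hz0)
    have hden0 : (0:ℝ) < 1 + 15*z := by linarith
    have hden : 0 < (1+15*z)/9 := by positivity
    have hx : 0 < 2*z / ((1+15*z)/9) := by positivity
    have hlog := Real.log_le_sub_one_of_pos hx
    rw [Real.log_div (by positivity) (ne_of_gt hden)] at hlog
    have hxe : 2*z/((1+15*z)/9) = 18*z/(1+15*z) := by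
      rw [div_div_eq_mul_div]
      ring_nf
    rw [hxe] at hlog
    linarith
  have hsplit : (∫ z in (0:ℝ)..1, (Real.log ((1+15*z)/9) + (18*z/(1+15*z) - 1)))
      = W 3 dA + (1/5 - (8/25)*Real.log 2) := by
    rw [integral_add hc1 hc2, hWA, intA_val]
  have hneg : (1:ℝ)/5 - (8/25)*Real.log 2 < 0 := by
    nlinarith [Real.log_two_gt_d9]
  rw [hWd]
  calc (∫ z in (0:ℝ)..1, Real.log (2*z))
      ≤ W 3 dA + (1/5 - (8/25)*Real.log 2) := by rw [← hsplit]; exact hmono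
    _ < W 3 dA := by linarith

lemma caseB (d : ℕ → ℝ) (h1 : d 1 = 0) (h2 : d 2 = 1/2) : W 3 d < W 3 dB := by
  have hWd : W 3 d = ∫ z in (0:ℝ)..1, Real.log (1-z) := by
    rw [W]
    apply integral_congr
    intro z _
    simp only [aFun3, h1, h2]
    ring_nf
  have hWB : W 3 dB = ∫ z in (0:ℝ)..1, Real.log ((1+z)/2) := by
    rw [W]
    apply integral_congr
    intro z _
    simp only [aFun3]
    congr 1
    norm_num [dB]
    ring
  have hne : ∀ z ∈ Set.uIcc (0:ℝ) 1, (1:ℝ)+z ≠ 0 := by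
    intro z hz; rw [uIcc01] at hz; have := hz.1; positivity
  have hc1 : IntervalIntegrable (fun z : ℝ => Real.log ((1+z)/2)) volume 0 1 := by
    apply ContinuousOn.intervalIntegrable
    apply ContinuousOn.log (by fun_prop)
    intro z hz
    rw [uIcc01] at hz
    have := hz.1
    positivity
  have hc2 : IntervalIntegrable (fun z : ℝ => 2*(1-z)/(1+z) - 1) volume 0 1 := by
    apply ContinuousOn.intervalIntegrable
    exact ((continuousOn_const.mul (continuousOn_const.sub continuousOn_id)).div
      (by fun_prop) hne).sub continuousOn_const
  have hg : IntervalIntegrable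
      (fun z : ℝ => Real.log ((1+z)/2) + (2*(1-z)/(1+z) - 1)) volume 0 1 := hc1.add hc2
  have hmono : (∫ z in (0:ℝ)..1, Real.log (1-z)) ≤
      ∫ z in (0:ℝ)..1, (Real.log ((1+z)/2) + (2*(1-z)/(1+z) - 1)) := by
    apply integral_mono_ae_restrict (by norm_num) intlog1mz hg
    filter_upwards [ae_ne_restrict 1 _, ae_restrict_mem measurableSet_Icc] with z hz1 hzI
    have hzlt : z < 1 := lt_of_le_of_ne hzI.2 hz1
    have hnum : (0:ℝ) < 1 - z := by linarith
    have hden0 : (0:ℝ) < 1 + z := by linarith [hzI.1]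
    have hden : 0 < (1+z)/2 := by positivity
    have hx : 0 < (1-z) / ((1+z)/2) := by positivity
    have hlog := Real.log_le_sub_one_of_pos hx
    rw [Real.log_div (ne_of_gt hnum) (ne_of_gt hden)] at hlog
    have hxe : (1-z)/((1+z)/2) = 2*(1-z)/(1+z) := by
      rw [div_div_eq_mul_div]
      ring_nf
    rw [hxe] at hlog
    linarith
  have hsplit : (∫ z in (0:ℝ)..1, (Real.log ((1+z)/2) + (2*(1-z)/(1+z) - 1)))
      = W 3 dB + (4*Real.log 2 - 3) := by
    rw [integral_add hc1 hc2, hWB, intB_val]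
  have hneg : 4*Real.log 2 - 3 < 0 := by
    nlinarith [Real.log_two_lt_d9]
  rw [hWd]
  calc (∫ z in (0:ℝ)..1, Real.log (1-z))
      ≤ W 3 dB + (4*Real.log 2 - 3) := by rw [← hsplit]; exact hmono
    _ < W 3 dB := by linarith

/-- For `n = 3`, any maximizer `d* = (d*_1, d*_2)` of `W` over `D` has
`d*_1 > 0` and `d*_2 > 0`; that is, the robust tournament with three players awards
strictly decreasing prizes `v_1 > v_2 > v_3 = 0`. -/
theorem robust_three_players_distinct_prizes
    (dstar : ℕ → ℝ) (hfeas : feasible 3 dstar)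
    (hmax : ∀ d : ℕ → ℝ, feasible 3 d → W 3 d ≤ W 3 dstar) :
    (0 < dstar 1 ∧ 0 < dstar 2) ∧
      (prize 3 dstar 1 > prize 3 dstar 2 ∧ prize 3 dstar 2 > prize 3 dstar 3 ∧
        prize 3 dstar 3 = 0) := by
  obtain ⟨hnn, hsum⟩ := hfeas
  rw [show (3:ℕ) - 1 = 2 from rfl, sum_Icc12] at hsum
  norm_num at hsum
  have hd1 : 0 ≤ dstar 1 := hnn 1 (by decide)
  have hd2 : 0 ≤ dstar 2 := hnn 2 (by decide)
  have h2 : 0 < dstar 2 := by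
    rcases lt_or_eq_of_le hd2 with h | h
    · exact h
    · exfalso
      have hz2 : dstar 2 = 0 := h.symm
      have hz1 : dstar 1 = 1 := by linarith
      have := caseA dstar hz1 hz2
      have := hmax dA feasible_dA
      linarith
  have h1 : 0 < dstar 1 := by
    rcases lt_or_eq_of_le hd1 with h | h
    · exact h
    · exfalso
      have hz1 : dstar 1 = 0 := h.symm
      have hz2 : dstar 2 = 1/2 := by linarith
      have := caseB dstar hz1 hz2
      have := hmax dB feasible_dB
      linarith
  refine ⟨⟨h1, h2⟩, ?_, ?_, ?_⟩
  · show prize 3 dstar 1 > prize 3 dstar 2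
    rw [prize, prize, show (3:ℕ) - 1 = 2 from rfl, sum_Icc12,
      show Finset.Icc 2 2 = {2} from rfl]
    simp
    linarith
  · show prize 3 dstar 2 > prize 3 dstar 3
    rw [prize, prize, show (3:ℕ) - 1 = 2 from rfl,
      show Finset.Icc 2 2 = {2} from rfl, show Finset.Icc 3 2 = ∅ from rfl]
    simpa using h2
  · rw [prize, show (3:ℕ) - 1 = 2 from rfl, show Finset.Icc 3 2 = ∅ from rfl]
    simp
end

section
/- For every integer n ≥ 2, the prize schedule v^∞ given by v^∞_r = (H_{n−1} − H_{r−1})/(n−1) for r = 1, …, n has Gini coefficient exactly 1/2; that is, (1/(2n)) · Σ_{i=1}^{n} Σ_{j=1}^{n} |v^∞_i − v^∞_j| = 1/2. -/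
open Finset

/-- The `m`-th harmonic number `H_m = Σ_{k=1}^m 1/k` (with `H_0 = 0`), as a real number. -/
noncomputable def harm (m : ℕ) : ℝ := ∑ k ∈ Finset.Icc 1 m, (1 : ℝ) / k

lemma harm_succ (n : ℕ) : harm (n + 1) = harm n + 1 / (n + 1 : ℝ) := by
  unfold harm
  rw [show Finset.Icc 1 (n+1) = insert (n+1) (Finset.Icc 1 n) by
        rw [← Finset.insert_Icc_right_eq_Icc_add_one (by omega)],
      Finset.sum_insert (by simp)]
  push_cast
  ring

lemma harm_mono : Monotone harm := by
  intro a b hab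
  exact Finset.sum_le_sum_of_subset_of_nonneg (Finset.Icc_subset_Icc_right hab)
    (fun k _ _ => by positivity)

lemma sum_harm (n : ℕ) : ∑ i ∈ Finset.Icc 1 n, harm (i - 1) = n * harm n - n := by
  induction n with
  | zero => simp [harm]
  | succ n ih =>
    rw [show Finset.Icc 1 (n+1) = insert (n+1) (Finset.Icc 1 n) by
          rw [← Finset.insert_Icc_right_eq_Icc_add_one (by omega)],
        Finset.sum_insert (by simp), ih, harm_succ]
    push_cast
    have : (n : ℝ) + 1 ≠ 0 := by positivity
    field_simp
    ring

lemma double_sum (n : ℕ) :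
    ∑ i ∈ Finset.Icc 1 n, ∑ j ∈ Finset.Icc 1 n, |harm (j - 1) - harm (i - 1)|
      = n * (n - 1 : ℝ) := by
  induction n with
  | zero => simp
  | succ n ih =>
    have hins : Finset.Icc 1 (n+1) = insert (n+1) (Finset.Icc 1 n) := by
      rw [← Finset.insert_Icc_right_eq_Icc_add_one (by omega)]
    have hnot : (n+1) ∉ Finset.Icc 1 n := by simp
    have key : ∑ i ∈ Finset.Icc 1 n, |harm n - harm (i - 1)| = n := by
      have : ∀ i ∈ Finset.Icc 1 n, |harm n - harm (i - 1)| = harm n - harm (i - 1) := by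
        intro i hi
        rw [abs_of_nonneg]
        have : i - 1 ≤ n := by simp at hi; omega
        linarith [harm_mono this]
      rw [Finset.sum_congr rfl this, Finset.sum_sub_distrib, sum_harm,
        Finset.sum_const, Nat.card_Icc]
      simp
    rw [hins, Finset.sum_insert hnot]
    have e1 : ∑ j ∈ insert (n+1) (Finset.Icc 1 n), |harm (j - 1) - harm (n + 1 - 1)|
        = ∑ j ∈ Finset.Icc 1 n, |harm n - harm (j - 1)| := by
      rw [Finset.sum_insert hnot]
      simp [abs_sub_comm]
    have e2 : ∀ i ∈ Finset.Icc 1 n,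
        ∑ j ∈ insert (n+1) (Finset.Icc 1 n), |harm (j - 1) - harm (i - 1)|
        = |harm n - harm (i - 1)| + ∑ j ∈ Finset.Icc 1 n, |harm (j - 1) - harm (i - 1)| := by
      intro i hi
      rw [Finset.sum_insert hnot]
      simp
    rw [e1, key, Finset.sum_congr rfl e2, Finset.sum_add_distrib, key, ih]
    push_cast
    ring

/-- For every `n ≥ 2`, the prize schedule
`v^∞_r = (H_{n-1} − H_{r-1})/(n−1)`, `r = 1, …, n`, has Gini coefficient exactly `1/2`:
`(1/(2n)) Σ_{i=1}^n Σ_{j=1}^n |v^∞_i − v^∞_j| = 1/2`. -/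
theorem gini_of_asymptotic_prizes (n : ℕ) (hn : 2 ≤ n) (v : ℕ → ℝ)
    (hv : ∀ r ∈ Finset.Icc 1 n, v r = (harm (n - 1) - harm (r - 1)) / ((n : ℝ) - 1)) :
    (1 / (2 * (n : ℝ))) *
        ∑ i ∈ Finset.Icc 1 n, ∑ j ∈ Finset.Icc 1 n, |v i - v j| = 1 / 2 := by
  have hn1 : (0:ℝ) < (n:ℝ) - 1 := by
    have : (2:ℝ) ≤ n := by exact_mod_cast hn
    linarith
  have hS : ∑ i ∈ Finset.Icc 1 n, ∑ j ∈ Finset.Icc 1 n, |v i - v j|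
      = (∑ i ∈ Finset.Icc 1 n, ∑ j ∈ Finset.Icc 1 n,
          |harm (j - 1) - harm (i - 1)|) / ((n:ℝ) - 1) := by
    rw [Finset.sum_div]
    refine Finset.sum_congr rfl fun i hi => ?_
    rw [Finset.sum_div]
    refine Finset.sum_congr rfl fun j hj => ?_
    rw [hv i hi, hv j hj, div_sub_div_same, abs_div, abs_of_pos hn1]
    ring_nf
  rw [hS, double_sum]
  have hn0 : (n:ℝ) ≠ 0 := by positivity
  field_simp
end

section
/- Fix an integer n ≥ 2. The maximizer of W over D is unique: if d, d' ∈ D satisfy W(e) ≤ W(d) and W(e) ≤ W(d') for every e ∈ D, then d = d'. (The objective W is strictly concave on D.) -/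
open MeasureTheory Finset

namespace MU

lemma log_int01 : IntervalIntegrable Real.log volume 0 1 := by
  have h := intervalIntegral.intervalIntegrable_deriv_of_nonneg (a := 0) (b := 1)
      (g := fun x : ℝ => x - x * Real.log x) (g' := fun x : ℝ => -Real.log x)
      ((continuous_id.sub Real.continuous_mul_log).continuousOn)
      (fun x hx => by
        simp only [min_self, min_eq_left, zero_le_one, max_eq_right, Set.mem_Ioo] at hx
        have := (hasDerivAt_id x).sub (Real.hasDerivAt_mul_log (ne_of_gt hx.1))
        exact this.congr_deriv (by ring))
      (fun x hx => by
        simp only [min_eq_left, zero_le_one, max_eq_right, Set.mem_Ioo] at hx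
        have : Real.log x ≤ 0 := Real.log_nonpos hx.1.le hx.2.le
        show (0:ℝ) ≤ -Real.log x
        linarith)
  have h2 := h.neg
  have : Real.log = (-fun x : ℝ => -Real.log x) := by funext x; simp
  rw [this]; exact h2

lemma log_one_sub_int01 : IntervalIntegrable (fun x : ℝ => Real.log (1 - x)) volume 0 1 := by
  simpa using (log_int01.comp_sub_left 1).symm

lemma continuous_aFun (n : ℕ) (d : ℕ → ℝ) : Continuous (aFun n d) := by
  unfold aFun
  exact continuous_finset_sum _ fun r _ => by fun_prop

lemma exists_pos {n : ℕ} {d : ℕ → ℝ} (hd : feasible n d) :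
    ∃ r ∈ Finset.Icc 1 (n - 1), 0 < d r := by
  by_contra h
  push_neg at h
  have hz : ∑ r ∈ Finset.Icc 1 (n - 1), (r : ℝ) * d r = 0 := by
    refine Finset.sum_eq_zero fun r hr => ?_
    have h1 := hd.1 r hr
    have h2 := h r hr
    have : d r = 0 := le_antisymm h2 h1
    simp [this]
  rw [hd.2] at hz
  norm_num at hz

lemma aFun_pos {n : ℕ} {d : ℕ → ℝ} (hd : feasible n d) {z : ℝ}
    (hz : z ∈ Set.Ioo (0:ℝ) 1) : 0 < aFun n d z := by
  obtain ⟨hz0, hz1⟩ := hz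
  have h1z : (0:ℝ) < 1 - z := by linarith
  obtain ⟨r0, hr0, hpos⟩ := exists_pos hd
  unfold aFun
  apply Finset.sum_pos'
  · intro r hr
    have := hd.1 r hr
    positivity
  · refine ⟨r0, hr0, ?_⟩
    simp only [Finset.mem_Icc] at hr0
    have hc : 0 < ((n - 1).choose r0 : ℝ) := by
      exact_mod_cast Nat.choose_pos hr0.2
    have hr0' : 0 < (r0 : ℝ) := by exact_mod_cast hr0.1
    positivity

/-- The upper bound constant. -/
noncomputable def Mval (n : ℕ) (d : ℕ → ℝ) : ℝ :=
  ∑ r ∈ Finset.Icc 1 (n - 1), (r : ℝ) * ((n - 1).choose r : ℝ) * d r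

lemma one_le_Mval {n : ℕ} {d : ℕ → ℝ} (hd : feasible n d) : 1 ≤ Mval n d := by
  rw [← hd.2]
  refine Finset.sum_le_sum fun r hr => ?_
  simp only [Finset.mem_Icc] at hr
  have hc : (1:ℝ) ≤ ((n - 1).choose r : ℝ) := by
    exact_mod_cast Nat.one_le_iff_ne_zero.2 (Nat.choose_pos hr.2).ne'
  have hdr := hd.1 r (Finset.mem_Icc.2 hr)
  have hr' : (0:ℝ) ≤ (r:ℝ) := by positivity
  nlinarith [mul_nonneg (mul_nonneg hr' (sub_nonneg.2 hc)) hdr]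

lemma aFun_le_Mval {n : ℕ} {d : ℕ → ℝ} (hd : feasible n d) {z : ℝ}
    (hz0 : 0 ≤ z) (hz1 : z ≤ 1) : aFun n d z ≤ Mval n d := by
  unfold aFun Mval
  refine Finset.sum_le_sum fun r hr => ?_
  have hdr := hd.1 r hr
  have h1 : z ^ (n - r - 1) ≤ 1 := pow_le_one₀ hz0 hz1
  have h2 : (1 - z) ^ (r - 1) ≤ 1 := pow_le_one₀ (by linarith) (by linarith)
  have h1' : 0 ≤ z ^ (n - r - 1) := pow_nonneg hz0 _
  have h2' : 0 ≤ (1 - z) ^ (r - 1) := pow_nonneg (by linarith) _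
  have hrc : (0:ℝ) ≤ (r:ℝ) * ((n - 1).choose r : ℝ) := by positivity
  calc (r : ℝ) * ((n - 1).choose r : ℝ) * z ^ (n - r - 1) * (1 - z) ^ (r - 1) * d r
      ≤ (r : ℝ) * ((n - 1).choose r : ℝ) * 1 * 1 * d r := by
        apply mul_le_mul_of_nonneg_right _ hdr
        apply mul_le_mul (by nlinarith) h2 h2' (by nlinarith)
    _ = (r : ℝ) * ((n - 1).choose r : ℝ) * d r := by ring

lemma aFun_lower {n : ℕ} (hn : 2 ≤ n) {d : ℕ → ℝ} (hd : feasible n d)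
    {r0 : ℕ} (hr0 : r0 ∈ Finset.Icc 1 (n - 1)) (hpos : 0 < d r0) {z : ℝ}
    (hz : z ∈ Set.Ioo (0:ℝ) 1) :
    (r0 : ℝ) * ((n - 1).choose r0 : ℝ) * d r0 * (z * (1 - z)) ^ (n - 2)
      ≤ aFun n d z := by
  obtain ⟨hz0, hz1⟩ := hz
  have h1z : (0:ℝ) < 1 - z := by linarith
  simp only [Finset.mem_Icc] at hr0
  have key : (r0 : ℝ) * ((n - 1).choose r0 : ℝ) * z ^ (n - r0 - 1) * (1 - z) ^ (r0 - 1) * d r0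
      ≤ aFun n d z := by
    unfold aFun
    refine Finset.single_le_sum (f := fun r : ℕ =>
      (r : ℝ) * ((n - 1).choose r : ℝ) * z ^ (n - r - 1) * (1 - z) ^ (r - 1) * d r)
      (fun r hr => ?_) (Finset.mem_Icc.2 hr0)
    have := hd.1 r hr
    positivity
  refine le_trans ?_ key
  rw [mul_pow]
  have hp1 : z ^ (n - 2) ≤ z ^ (n - r0 - 1) :=
    pow_le_pow_of_le_one hz0.le hz1.le (by omega)
  have hp2 : (1 - z) ^ (n - 2) ≤ (1 - z) ^ (r0 - 1) :=
    pow_le_pow_of_le_one h1z.le (by linarith) (by omega)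
  have hc : (0:ℝ) < (r0 : ℝ) * ((n - 1).choose r0 : ℝ) * d r0 := by
    have h1 : 0 < ((n - 1).choose r0 : ℝ) := by exact_mod_cast Nat.choose_pos hr0.2
    have h2 : 0 < (r0 : ℝ) := by exact_mod_cast hr0.1
    positivity
  have hzp : (0:ℝ) ≤ z ^ (n - 2) := by positivity
  have hzp2 : (0:ℝ) ≤ z ^ (n - r0 - 1) := by positivity
  have h1zp : (0:ℝ) ≤ (1 - z) ^ (n - 2) := by positivity
  calc (r0 : ℝ) * ((n - 1).choose r0 : ℝ) * d r0 * (z ^ (n - 2) * (1 - z) ^ (n - 2))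
      ≤ (r0 : ℝ) * ((n - 1).choose r0 : ℝ) * d r0 * (z ^ (n - r0 - 1) * (1 - z) ^ (r0 - 1)) := by
        apply mul_le_mul_of_nonneg_left _ hc.le
        apply mul_le_mul hp1 hp2 h1zp hzp2
    _ = (r0 : ℝ) * ((n - 1).choose r0 : ℝ) * z ^ (n - r0 - 1) * (1 - z) ^ (r0 - 1) * d r0 := by
        ring

lemma ae_ne_one : ∀ᵐ z ∂(volume.restrict (Set.Ioc (0:ℝ) 1)), z ≠ 1 := by
  refine ae_iff.2 ?_
  have h : {z : ℝ | ¬ z ≠ 1} = {1} := by ext z; simp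
  rw [h, Measure.restrict_apply (measurableSet_singleton 1)]
  exact measure_mono_null Set.inter_subset_left Real.volume_singleton

lemma log_aFun_integrableOn {n : ℕ} (hn : 2 ≤ n) {d : ℕ → ℝ} (hd : feasible n d) :
    IntegrableOn (fun z => Real.log (aFun n d z)) (Set.Ioc (0:ℝ) 1) volume := by
  obtain ⟨r0, hr0, hpos⟩ := exists_pos hd
  set c : ℝ := (r0 : ℝ) * ((n - 1).choose r0 : ℝ) * d r0 with hc_def
  have hc : 0 < c := by
    simp only [Finset.mem_Icc] at hr0
    have h1 : 0 < ((n - 1).choose r0 : ℝ) := by exact_mod_cast Nat.choose_pos hr0.2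
    have h2 : 0 < (r0 : ℝ) := by exact_mod_cast hr0.1
    positivity
  set M : ℝ := Mval n d with hM_def
  have hM : 1 ≤ M := one_le_Mval hd
  -- the bound function
  set B : ℝ → ℝ := fun z => |Real.log M| + |Real.log c| +
      (n : ℝ) * (|Real.log z| + |Real.log (1 - z)|) with hB_def
  have hl1 : IntegrableOn Real.log (Set.Ioc (0:ℝ) 1) volume :=
    (intervalIntegrable_iff_integrableOn_Ioc_of_le zero_le_one).1 log_int01
  have hl2 : IntegrableOn (fun z : ℝ => Real.log (1 - z)) (Set.Ioc (0:ℝ) 1) volume :=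
    (intervalIntegrable_iff_integrableOn_Ioc_of_le zero_le_one).1 log_one_sub_int01
  have hBint : IntegrableOn B (Set.Ioc (0:ℝ) 1) volume := by
    have hconst : IntegrableOn (fun _ : ℝ => |Real.log M| + |Real.log c|)
        (Set.Ioc (0:ℝ) 1) volume := by
      refine integrableOn_const ?_ enorm_ne_top
      rw [Real.volume_Ioc]
      norm_num
    exact hconst.add (((hl1.abs.add hl2.abs)).const_mul _)
  have hmeas : AEStronglyMeasurable (fun z => Real.log (aFun n d z))
      (volume.restrict (Set.Ioc (0:ℝ) 1)) :=
    (Real.measurable_log.comp (continuous_aFun n d).measurable).aestronglyMeasurable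
  refine Integrable.mono' hBint hmeas ?_
  filter_upwards [ae_restrict_mem measurableSet_Ioc, ae_ne_one] with z hz hz1
  have hzIoo : z ∈ Set.Ioo (0:ℝ) 1 := ⟨hz.1, lt_of_le_of_ne hz.2 hz1⟩
  obtain ⟨hz0, hzlt⟩ := hzIoo
  have h1z : (0:ℝ) < 1 - z := by linarith
  have hfpos : 0 < aFun n d z := aFun_pos hd ⟨hz0, hzlt⟩
  have hupper : Real.log (aFun n d z) ≤ Real.log M :=
    Real.log_le_log hfpos (aFun_le_Mval hd hz0.le hzlt.le)
  have hlower : Real.log c + (n - 2 : ℕ) * (Real.log z + Real.log (1 - z))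
      ≤ Real.log (aFun n d z) := by
    have hlb := aFun_lower hn hd hr0 hpos ⟨hz0, hzlt⟩
    have hlbpos : 0 < c * (z * (1 - z)) ^ (n - 2) := by positivity
    have := Real.log_le_log hlbpos hlb
    rw [Real.log_mul hc.ne' (by positivity), Real.log_pow,
        Real.log_mul hz0.ne' h1z.ne'] at this
    exact this
  rw [Real.norm_eq_abs, abs_le]
  constructor
  · have e1 : -|Real.log c| ≤ Real.log c := neg_abs_le _
    have e2 : ((n - 2 : ℕ) : ℝ) * (Real.log z + Real.log (1 - z)) ≥
        -((n : ℝ) * (|Real.log z| + |Real.log (1 - z)|)) := by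
      have hn2 : ((n - 2 : ℕ) : ℝ) ≤ (n : ℝ) := by exact_mod_cast Nat.sub_le n 2
      have hn2' : (0:ℝ) ≤ ((n - 2 : ℕ) : ℝ) := by positivity
      have a1 : -(|Real.log z|) ≤ Real.log z := neg_abs_le _
      have a2 : -(|Real.log (1 - z)|) ≤ Real.log (1 - z) := neg_abs_le _
      have habs : (0:ℝ) ≤ |Real.log z| + |Real.log (1 - z)| := by positivity
      nlinarith
    have e3 : (0:ℝ) ≤ |Real.log M| := abs_nonneg _
    simp only [hB_def]
    nlinarith [hlower]
  · have e1 : Real.log M ≤ |Real.log M| := le_abs_self _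
    have e2 : (0:ℝ) ≤ |Real.log c| := abs_nonneg _
    have e3 : (0:ℝ) ≤ (n : ℝ) * (|Real.log z| + |Real.log (1 - z)|) := by positivity
    simp only [hB_def]
    linarith

lemma log_avg_ge {x y : ℝ} (hx : 0 < x) (hy : 0 < y) :
    (Real.log x + Real.log y) / 2 ≤ Real.log ((x + y) / 2) := by
  have hs : Real.log (Real.sqrt (x * y)) = (Real.log x + Real.log y) / 2 := by
    rw [Real.log_sqrt (by positivity), Real.log_mul hx.ne' hy.ne']
  rw [← hs]
  apply Real.log_le_log (Real.sqrt_pos.2 (by positivity))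
  nlinarith [sq_nonneg (Real.sqrt x - Real.sqrt y), Real.sq_sqrt hx.le, Real.sq_sqrt hy.le,
    Real.sqrt_mul hx.le y, Real.sqrt_nonneg x, Real.sqrt_nonneg y]

lemma log_avg_eq {x y : ℝ} (hx : 0 < x) (hy : 0 < y)
    (h : Real.log ((x + y) / 2) = (Real.log x + Real.log y) / 2) : x = y := by
  have hs : Real.log (Real.sqrt (x * y)) = (Real.log x + Real.log y) / 2 := by
    rw [Real.log_sqrt (by positivity), Real.log_mul hx.ne' hy.ne']
  have heq : (x + y) / 2 = Real.sqrt (x * y) := by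
    have h1 : Real.exp (Real.log ((x + y) / 2)) = (x + y) / 2 :=
      Real.exp_log (by positivity)
    have h2 : Real.exp (Real.log (Real.sqrt (x * y))) = Real.sqrt (x * y) :=
      Real.exp_log (Real.sqrt_pos.2 (by positivity))
    rw [← h1, ← h2, h, hs]
  have hsq := Real.sq_sqrt (show (0:ℝ) ≤ x * y by positivity)
  have h2 : (x - y) ^ 2 = 0 := by nlinarith
  have := pow_eq_zero_iff (two_ne_zero) |>.1 h2
  linarith

lemma aFun_avg (n : ℕ) (d d' : ℕ → ℝ) (z : ℝ) :
    aFun n (fun r => (d r + d' r) / 2) z = (aFun n d z + aFun n d' z) / 2 := by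
  unfold aFun
  rw [← Finset.sum_add_distrib, Finset.sum_div]
  exact Finset.sum_congr rfl fun r _ => by ring

end MU

/-- The maximizer of `W` over `D` is unique: if `d, d' ∈ D` both
maximize `W` over `D`, then `d = d'` (as vectors of prize differentials, i.e., on
ranks `1, …, n−1`). -/
theorem maximizer_unique (n : ℕ) (hn : 2 ≤ n) (d d' : ℕ → ℝ)
    (hd : feasible n d) (hd' : feasible n d')
    (hmax : ∀ e : ℕ → ℝ, feasible n e → W n e ≤ W n d)
    (hmax' : ∀ e : ℕ → ℝ, feasible n e → W n e ≤ W n d') :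
    ∀ r ∈ Finset.Icc 1 (n - 1), d r = d' r := by
  classical
  set e : ℕ → ℝ := fun r => (d r + d' r) / 2 with he_def
  have he : feasible n e := by
    constructor
    · intro r hr
      have h1 := hd.1 r hr
      have h2 := hd'.1 r hr
      simp only [he_def]
      linarith
    · have : ∑ r ∈ Finset.Icc 1 (n - 1), (r : ℝ) * e r
          = (∑ r ∈ Finset.Icc 1 (n - 1), (r : ℝ) * d r
            + ∑ r ∈ Finset.Icc 1 (n - 1), (r : ℝ) * d' r) / 2 := by
        rw [← Finset.sum_add_distrib, Finset.sum_div]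
        exact Finset.sum_congr rfl fun r _ => by simp only [he_def]; ring
      rw [this, hd.2, hd'.2]
      norm_num
  have hWdd' : W n d' = W n d := le_antisymm (hmax d' hd') (hmax' d hd)
  -- integrability
  have hif := MU.log_aFun_integrableOn hn hd
  have hig := MU.log_aFun_integrableOn hn hd'
  have hih := MU.log_aFun_integrableOn hn he
  set φ : ℝ → ℝ := fun z => Real.log (aFun n e z)
      - (Real.log (aFun n d z) + Real.log (aFun n d' z)) / 2 with hφ_def
  have hφint : IntegrableOn φ (Set.Ioc (0:ℝ) 1) volume :=
    hih.sub ((hif.add hig).div_const 2)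
  have hφnn : 0 ≤ᵐ[volume.restrict (Set.Ioc (0:ℝ) 1)] φ := by
    filter_upwards [ae_restrict_mem measurableSet_Ioc, MU.ae_ne_one] with z hz hz1
    have hzIoo : z ∈ Set.Ioo (0:ℝ) 1 := ⟨hz.1, lt_of_le_of_ne hz.2 hz1⟩
    have hf := MU.aFun_pos hd hzIoo
    have hg := MU.aFun_pos hd' hzIoo
    have havg := MU.aFun_avg n d d' z
    simp only [hφ_def, Pi.zero_apply, sub_nonneg, he_def]
    rw [show (fun r => (d r + d' r) / 2) = e from rfl, havg]
    exact MU.log_avg_ge hf hg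
  have hWioc : ∀ dd : ℕ → ℝ, W n dd = ∫ z in Set.Ioc (0:ℝ) 1, Real.log (aFun n dd z) := by
    intro dd
    rw [W, intervalIntegral.integral_of_le zero_le_one]
  have hφint0 : ∫ z in Set.Ioc (0:ℝ) 1, φ z = W n e - (W n d + W n d') / 2 := by
    have hB' : IntegrableOn (fun z => (Real.log (aFun n d z) + Real.log (aFun n d' z)) / 2)
        (Set.Ioc (0:ℝ) 1) volume := by
      have := (hif.add hig).div_const 2
      simpa [Pi.add_apply, IntegrableOn] using this
    rw [hWioc, hWioc, hWioc]
    simp only [hφ_def]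
    rw [integral_sub hih hB']
    congr 1
    rw [integral_div, integral_add hif hig]
  have hle : ∫ z in Set.Ioc (0:ℝ) 1, φ z ≤ 0 := by
    rw [hφint0, hWdd']
    have := hmax e he
    linarith
  have hge : 0 ≤ ∫ z in Set.Ioc (0:ℝ) 1, φ z := integral_nonneg_of_ae hφnn
  have h0 : ∫ z in Set.Ioc (0:ℝ) 1, φ z = 0 := le_antisymm hle hge
  have hae : φ =ᵐ[volume.restrict (Set.Ioc (0:ℝ) 1)] 0 :=
    (integral_eq_zero_iff_of_nonneg_ae hφnn hφint).1 h0
  -- the set where aFun n d = aFun n d'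
  set E : Set ℝ := {z : ℝ | z ∈ Set.Ioo (0:ℝ) 1 ∧ aFun n d z = aFun n d' z} with hE_def
  have haeE : ∀ᵐ z ∂(volume.restrict (Set.Ioc (0:ℝ) 1)), z ∈ E := by
    filter_upwards [hae, ae_restrict_mem measurableSet_Ioc, MU.ae_ne_one] with z h1 h2 h3
    have hzIoo : z ∈ Set.Ioo (0:ℝ) 1 := ⟨h2.1, lt_of_le_of_ne h2.2 h3⟩
    refine ⟨hzIoo, ?_⟩
    have hf := MU.aFun_pos hd hzIoo
    have hg := MU.aFun_pos hd' hzIoo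
    have havg := MU.aFun_avg n d d' z
    simp only [hφ_def, Pi.zero_apply] at h1
    have heq : Real.log ((aFun n d z + aFun n d' z) / 2)
        = (Real.log (aFun n d z) + Real.log (aFun n d' z)) / 2 := by
      rw [← havg]
      rw [show (fun r => (d r + d' r) / 2) = e from rfl]
      linarith [h1]
    exact MU.log_avg_eq hf hg heq
  have hEc0 : volume (Eᶜ ∩ Set.Ioc (0:ℝ) 1) = 0 := by
    have := ae_iff.1 haeE
    rwa [Measure.restrict_apply' measurableSet_Ioc] at this
  have hEinf : E.Infinite := by
    intro hfin
    have h1 : volume (Set.Ioc (0:ℝ) 1) ≤ volume E + volume (Eᶜ ∩ Set.Ioc (0:ℝ) 1) := by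
      refine le_trans (measure_mono ?_) (measure_union_le _ _)
      intro z hz
      by_cases h : z ∈ E
      · exact Or.inl h
      · exact Or.inr ⟨h, hz⟩
    rw [hfin.measure_zero, hEc0, Real.volume_Ioc] at h1
    norm_num at h1
  -- polynomial
  set c : ℕ → ℝ := fun r => (r : ℝ) * ((n - 1).choose r : ℝ) * (d r - d' r) with hc_def
  set q : Polynomial ℝ := ∑ r ∈ Finset.Icc 1 (n - 1),
      Polynomial.C (c r) * Polynomial.X ^ (r - 1) with hq_def
  have hqroot : ∀ z ∈ E, q.IsRoot ((1 - z) / z) := by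
    rintro z ⟨⟨hz0, hz1⟩, heqz⟩
    have hzne : z ≠ 0 := ne_of_gt hz0
    have hkey : z ^ (n - 2) * q.eval ((1 - z) / z) = aFun n d z - aFun n d' z := by
      simp only [hq_def, Polynomial.eval_finset_sum, Polynomial.eval_mul,
        Polynomial.eval_pow, Polynomial.eval_C, Polynomial.eval_X]
      unfold aFun
      rw [Finset.mul_sum, ← Finset.sum_sub_distrib]
      refine Finset.sum_congr rfl fun r hr => ?_
      simp only [Finset.mem_Icc] at hr
      have hzpow : z ^ (n - 2) = z ^ (n - r - 1) * z ^ (r - 1) := by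
        rw [← pow_add]
        congr 1
        omega
      rw [hzpow, div_pow, hc_def]
      field_simp
    have : z ^ (n - 2) * q.eval ((1 - z) / z) = 0 := by rw [hkey, heqz, sub_self]
    have hzp : z ^ (n - 2) ≠ 0 := pow_ne_zero _ hzne
    exact (mul_eq_zero.1 this).resolve_left hzp
  have hq0 : q = 0 := by
    apply Polynomial.eq_zero_of_infinite_isRoot
    have hinj : Set.InjOn (fun z : ℝ => (1 - z) / z) E := by
      rintro z1 ⟨⟨h10, _⟩, _⟩ z2 ⟨⟨h20, _⟩, _⟩ heq12
      simp only at heq12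
      rw [div_eq_div_iff (ne_of_gt h10) (ne_of_gt h20)] at heq12
      nlinarith
    refine Set.Infinite.mono ?_ (hEinf.image hinj)
    rintro w ⟨z, hz, rfl⟩
    exact hqroot z hz
  -- extract coefficients
  intro r0 hr0
  simp only [Finset.mem_Icc] at hr0
  have hcoeff : c r0 = 0 := by
    have h := congrArg (fun p : Polynomial ℝ => p.coeff (r0 - 1)) hq0
    simp only [Polynomial.coeff_zero] at h
    rw [hq_def, Polynomial.finset_sum_coeff] at h
    rw [Finset.sum_eq_single r0] at h
    · simpa [Polynomial.coeff_C_mul, Polynomial.coeff_X_pow] using h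
    · intro r hr hne
      simp only [Finset.mem_Icc] at hr
      have : ¬ (r0 - 1 = r - 1) := by omega
      simp [Polynomial.coeff_C_mul, Polynomial.coeff_X_pow, this]
    · intro habs
      exact absurd (Finset.mem_Icc.2 hr0) habs
  have hcpos : (0:ℝ) < (r0 : ℝ) * ((n - 1).choose r0 : ℝ) := by
    have h1 : 0 < ((n - 1).choose r0 : ℝ) := by exact_mod_cast Nat.choose_pos hr0.2
    have h2 : 0 < (r0 : ℝ) := by exact_mod_cast hr0.1
    positivity
  have : d r0 - d' r0 = 0 := by
    simp only [hc_def] at hcoeff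
    rcases mul_eq_zero.1 hcoeff with h | h
    · exact absurd h hcpos.ne'
    · exact h
  linarith
end

section
/- Fix an integer n ≥ 2. Suppose d* ∈ D satisfies the Kuhn–Tucker conditions with multiplier μ = 1: ℓ_r(d*) ≤ r for every r = 1, …, n−1, with equality whenever d*_r > 0. Then d* maximizes W over D, i.e., W(d) ≤ W(d*) for every d ∈ D. -/
open MeasureTheory Finset

/-- The marginal incentive term `ℓ_r(d)` as an extended-real-valued (lower) integral,
taking the value `+∞` if the integral diverges. -/
noncomputable def ellE (n : ℕ) (d : ℕ → ℝ) (r : ℕ) : ENNReal :=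
  ∫⁻ z in Set.Ioo (0:ℝ) 1,
    ENNReal.ofReal
      ((r : ℝ) * ((n - 1).choose r : ℝ) * z ^ (n - r - 1) * (1 - z) ^ (r - 1) /
        aFun n d z)

noncomputable def cFun (n r : ℕ) (z : ℝ) : ℝ :=
  (r : ℝ) * ((n - 1).choose r : ℝ) * z ^ (n - r - 1) * (1 - z) ^ (r - 1)


lemma aFun_eq (n : ℕ) (d : ℕ → ℝ) (z : ℝ) :
    aFun n d z = ∑ r ∈ Finset.Icc 1 (n - 1), cFun n r z * d r := rfl

lemma cFun_pos {n r : ℕ} (hr : r ∈ Finset.Icc 1 (n - 1)) {z : ℝ}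
    (hz : z ∈ Set.Ioo (0:ℝ) 1) : 0 < cFun n r z := by
  simp only [Finset.mem_Icc] at hr
  have h1 : (0:ℝ) < r := by exact_mod_cast hr.1
  have h2 : (0:ℝ) < ((n-1).choose r : ℝ) := by
    exact_mod_cast Nat.choose_pos hr.2
  have h3 : (0:ℝ) < z ^ (n - r - 1) := pow_pos hz.1 _
  have h4 : (0:ℝ) < (1 - z) ^ (r - 1) := pow_pos (by linarith [hz.2]) _
  unfold cFun; positivity

lemma cFun_le {n r : ℕ} {z : ℝ} (hz : z ∈ Set.Ioo (0:ℝ) 1) :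
    cFun n r z ≤ (r : ℝ) * ((n-1).choose r : ℝ) := by
  have h3 : z ^ (n - r - 1) ≤ 1 := pow_le_one₀ hz.1.le hz.2.le
  have h4 : (1 - z) ^ (r - 1) ≤ 1 := pow_le_one₀ (by linarith [hz.2]) (by linarith [hz.1])
  have h3' : (0:ℝ) ≤ z ^ (n - r - 1) := pow_nonneg hz.1.le _
  have h4' : (0:ℝ) ≤ (1 - z) ^ (r - 1) := pow_nonneg (by linarith [hz.2]) _
  have hrc : (0:ℝ) ≤ (r:ℝ) * ((n-1).choose r : ℝ) := by positivity
  unfold cFun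
  calc (r : ℝ) * ((n-1).choose r : ℝ) * z ^ (n - r - 1) * (1 - z) ^ (r - 1)
      ≤ (r : ℝ) * ((n-1).choose r : ℝ) * z ^ (n - r - 1) * 1 := by
        apply mul_le_mul_of_nonneg_left h4 (by positivity)
    _ = (r : ℝ) * ((n-1).choose r : ℝ) * z ^ (n - r - 1) := by ring
    _ ≤ (r : ℝ) * ((n-1).choose r : ℝ) * 1 := by
        apply mul_le_mul_of_nonneg_left h3 hrc
    _ = _ := by ring

lemma feasible.exists_pos {n : ℕ} {d : ℕ → ℝ} (hd : feasible n d) :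
    ∃ r ∈ Finset.Icc 1 (n - 1), 0 < d r := by
  by_contra h
  push_neg at h
  have : ∑ r ∈ Finset.Icc 1 (n - 1), (r : ℝ) * d r = 0 := by
    apply Finset.sum_eq_zero
    intro r hr
    have h0 : d r = 0 := le_antisymm (h r hr) (hd.1 r hr)
    rw [h0, mul_zero]
  rw [hd.2] at this
  norm_num at this

lemma aFun_continuous (n : ℕ) (d : ℕ → ℝ) : Continuous (fun z => aFun n d z) := by
  unfold aFun
  exact continuous_finset_sum _ fun r _ => by fun_prop

lemma integrableOn_log_Ioo : IntegrableOn Real.log (Set.Ioo (0:ℝ) 1) := by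
  have hbound : IntegrableOn (fun z : ℝ => 2 * z ^ (-(1/2) : ℝ)) (Set.Ioo 0 1) := by
    have h := (intervalIntegral.intervalIntegrable_rpow'
      (a := 0) (b := 1) (r := -(1/2)) (by norm_num)).const_mul 2
    rwa [intervalIntegrable_iff_integrableOn_Ioo_of_le (by norm_num)] at h
  refine hbound.mono' Real.measurable_log.aestronglyMeasurable ?_
  filter_upwards [ae_restrict_mem measurableSet_Ioo] with z hz
  have hz0 := hz.1
  have hz1 := hz.2
  have hlogneg : Real.log z ≤ 0 := Real.log_nonpos hz0.le hz1.le
  rw [Real.norm_eq_abs, abs_of_nonpos hlogneg]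
  have hrp : (0:ℝ) < z ^ (-(1/2) : ℝ) := Real.rpow_pos_of_pos hz0 _
  have h1 : Real.log (z ^ (-(1/2):ℝ)) = -(1/2) * Real.log z := Real.log_rpow hz0 _
  have h2 : Real.log (z ^ (-(1/2):ℝ)) ≤ z ^ (-(1/2):ℝ) - 1 :=
    Real.log_le_sub_one_of_pos hrp
  nlinarith

lemma integrableOn_log_one_sub_Ioo :
    IntegrableOn (fun z : ℝ => Real.log (1 - z)) (Set.Ioo (0:ℝ) 1) := by
  have h : IntervalIntegrable Real.log volume 0 1 := by
    rw [intervalIntegrable_iff_integrableOn_Ioo_of_le (by norm_num)]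
    exact integrableOn_log_Ioo
  have h2 := (h.comp_sub_left 1).symm
  norm_num at h2
  rwa [intervalIntegrable_iff_integrableOn_Ioo_of_le (by norm_num)] at h2

lemma integrableOn_log_aFun {n : ℕ} {d : ℕ → ℝ} (hd : feasible n d) :
    IntegrableOn (fun z => Real.log (aFun n d z)) (Set.Ioo (0:ℝ) 1) := by
  obtain ⟨r0, hr0, hd0⟩ := hd.exists_pos
  set M : ℝ := ∑ r ∈ Finset.Icc 1 (n - 1), (r : ℝ) * ((n-1).choose r : ℝ) * d r with hM
  have hM1 : (1:ℝ) ≤ M := by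
    rw [hM, ← hd.2]
    apply Finset.sum_le_sum
    intro r hr
    simp only [Finset.mem_Icc] at hr
    have hc : (1:ℝ) ≤ ((n-1).choose r : ℝ) := by exact_mod_cast Nat.choose_pos hr.2
    have hdr := hd.1 r (Finset.mem_Icc.mpr hr)
    have hr0 : (0:ℝ) ≤ (r:ℝ) := Nat.cast_nonneg r
    have key : 0 ≤ (((n-1).choose r : ℝ) - 1) * ((r:ℝ) * d r) :=
      mul_nonneg (by linarith) (mul_nonneg hr0 hdr)
    nlinarith
  set c0 : ℝ := (r0 : ℝ) * ((n-1).choose r0 : ℝ) * d r0 with hc0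
  have hc0pos : 0 < c0 := by
    simp only [Finset.mem_Icc] at hr0
    have h1 : (0:ℝ) < r0 := by exact_mod_cast hr0.1
    have h2 : (0:ℝ) < ((n-1).choose r0 : ℝ) := by exact_mod_cast Nat.choose_pos hr0.2
    positivity
  -- dominating function
  set g : ℝ → ℝ := fun z => Real.log M + |Real.log c0| +
      ((n - r0 - 1 : ℕ) : ℝ) * |Real.log z| + ((r0 - 1 : ℕ) : ℝ) * |Real.log (1 - z)|
    with hg
  have hgint : IntegrableOn g (Set.Ioo (0:ℝ) 1) := by
    apply Integrable.add
    apply Integrable.add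
    · exact (integrableOn_const_iff).mpr (Or.inr (by simp [Real.volume_Ioo]))
    · exact (integrableOn_log_Ioo.abs.const_mul _)
    · exact (integrableOn_log_one_sub_Ioo.abs.const_mul _)
  refine hgint.mono' ((Real.measurable_log.comp
    (aFun_continuous n d).measurable).aestronglyMeasurable) ?_
  filter_upwards [ae_restrict_mem measurableSet_Ioo] with z hz
  have hapos : 0 < aFun n d z := aFun_pos hd hz
  have hupper : aFun n d z ≤ M := by
    rw [aFun_eq, hM]
    apply Finset.sum_le_sum
    intro r hr
    exact mul_le_mul_of_nonneg_right (cFun_le hz) (hd.1 r hr)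
  have hlower : cFun n r0 z * d r0 ≤ aFun n d z := by
    rw [aFun_eq]
    apply Finset.single_le_sum (fun r hr => mul_nonneg (cFun_pos hr hz).le (hd.1 r hr)) hr0
  have hcd : 0 < cFun n r0 z * d r0 := mul_pos (cFun_pos hr0 hz) hd0
  have hlogup : Real.log (aFun n d z) ≤ Real.log M := Real.log_le_log hapos hupper
  have hloglow : Real.log (cFun n r0 z * d r0) ≤ Real.log (aFun n d z) :=
    Real.log_le_log hcd hlower
  have hz1 : (0:ℝ) < 1 - z := by linarith [hz.2]
  have hexp : Real.log (cFun n r0 z * d r0) =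
      Real.log c0 + ((n - r0 - 1 : ℕ) : ℝ) * Real.log z
        + ((r0 - 1 : ℕ) : ℝ) * Real.log (1 - z) := by
    unfold cFun
    rw [hc0]
    have h1 : (0:ℝ) < (r0:ℝ) * ((n-1).choose r0 : ℝ) := by
      simp only [Finset.mem_Icc] at hr0
      have h1 : (0:ℝ) < r0 := by exact_mod_cast hr0.1
      have h2 : (0:ℝ) < ((n-1).choose r0 : ℝ) := by exact_mod_cast Nat.choose_pos hr0.2
      positivity
    have e1 : (r0:ℝ) * ((n - 1).choose r0 : ℝ) * z ^ (n - r0 - 1) * (1 - z) ^ (r0 - 1) * d r0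
        = ((r0:ℝ) * ((n - 1).choose r0 : ℝ) * d r0) * z ^ (n - r0 - 1) * (1 - z) ^ (r0 - 1) := by
      ring
    have hzp : (0:ℝ) < z ^ (n - r0 - 1) := pow_pos hz.1 _
    have h1p : (0:ℝ) < (1 - z) ^ (r0 - 1) := pow_pos hz1 _
    have hcp : (0:ℝ) < (r0:ℝ) * ((n - 1).choose r0 : ℝ) * d r0 := by positivity
    rw [e1, Real.log_mul (mul_pos hcp hzp).ne' h1p.ne',
      Real.log_mul hcp.ne' hzp.ne', Real.log_pow, Real.log_pow]
  have hbound : |Real.log (aFun n d z)| ≤ g z := by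
    have hgabs : |Real.log (cFun n r0 z * d r0)| ≤ |Real.log c0| +
        ((n - r0 - 1 : ℕ) : ℝ) * |Real.log z| + ((r0 - 1 : ℕ) : ℝ) * |Real.log (1 - z)| := by
      rw [hexp]
      calc |Real.log c0 + ((n - r0 - 1 : ℕ) : ℝ) * Real.log z
            + ((r0 - 1 : ℕ) : ℝ) * Real.log (1 - z)|
          ≤ |Real.log c0 + ((n - r0 - 1 : ℕ) : ℝ) * Real.log z|
            + |((r0 - 1 : ℕ) : ℝ) * Real.log (1 - z)| := abs_add_le _ _
        _ ≤ |Real.log c0| + |((n - r0 - 1 : ℕ) : ℝ) * Real.log z|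
            + |((r0 - 1 : ℕ) : ℝ) * Real.log (1 - z)| := by
            have := abs_add_le (Real.log c0) (((n - r0 - 1 : ℕ) : ℝ) * Real.log z)
            linarith
        _ = _ := by
            rw [abs_mul, abs_mul, Nat.abs_cast, Nat.abs_cast]
    have hlogM : 0 ≤ Real.log M := Real.log_nonneg hM1
    simp only [hg]
    rcases le_or_gt 0 (Real.log (aFun n d z)) with h | h
    · rw [abs_of_nonneg h]
      have t1 : 0 ≤ ((n - r0 - 1 : ℕ) : ℝ) * |Real.log z| := by positivity
      have t2 : 0 ≤ ((r0 - 1 : ℕ) : ℝ) * |Real.log (1 - z)| := by positivity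
      have t3 : 0 ≤ |Real.log c0| := abs_nonneg _
      linarith
    · rw [abs_of_neg h]
      have h2 : -Real.log (aFun n d z) ≤ -Real.log (cFun n r0 z * d r0) := by linarith
      have h3 : -Real.log (cFun n r0 z * d r0) ≤ |Real.log (cFun n r0 z * d r0)| :=
        neg_le_abs _
      linarith
  simpa [Real.norm_eq_abs] using hbound


lemma cFun_continuous (n r : ℕ) : Continuous (cFun n r) := by
  unfold cFun; fun_prop

lemma W_eq (n : ℕ) (d : ℕ → ℝ) :
    W n d = ∫ z in Set.Ioo (0:ℝ) 1, Real.log (aFun n d z) := by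
  rw [W, intervalIntegral.integral_of_le zero_le_one, integral_Ioc_eq_integral_Ioo]


/-- If `d* ∈ D` satisfies the Kuhn–Tucker conditions with multiplier
`μ = 1` — i.e., `ℓ_r(d*) ≤ r` for every `r = 1, …, n−1`, with equality whenever
`d*_r > 0` — then `d*` maximizes `W` over `D`. -/
theorem KT_implies_maximizer (n : ℕ) (hn : 2 ≤ n) (dstar : ℕ → ℝ)
    (hfeas : feasible n dstar)
    (hKT : ∀ r ∈ Finset.Icc 1 (n - 1),
      ellE n dstar r ≤ ENNReal.ofReal (r : ℝ) ∧
        (0 < dstar r → ellE n dstar r = ENNReal.ofReal (r : ℝ))) :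
    ∀ d : ℕ → ℝ, feasible n d → W n d ≤ W n dstar := by
  intro d hd
  set I : Set ℝ := Set.Ioo (0:ℝ) 1 with hI
  -- the marginal functions
  set f : ℕ → ℝ → ℝ := fun r z => cFun n r z / aFun n dstar z with hf
  have hmeas : ∀ r : ℕ, AEStronglyMeasurable (f r) (volume.restrict I) :=
    fun r => ((cFun_continuous n r).measurable.div
      (aFun_continuous n dstar).measurable).aestronglyMeasurable
  have hnonneg : ∀ r ∈ Finset.Icc 1 (n - 1), 0 ≤ᵐ[volume.restrict I] f r := by
    intro r hr
    filter_upwards [ae_restrict_mem measurableSet_Ioo] with z hz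
    exact le_of_lt (div_pos (cFun_pos hr hz) (aFun_pos hfeas hz))
  have hlint : ∀ r : ℕ, (∫⁻ z in I, ENNReal.ofReal (f r z)) = ellE n dstar r := fun r => rfl
  have hfint : ∀ r ∈ Finset.Icc 1 (n - 1), IntegrableOn (f r) I := by
    intro r hr
    refine ⟨hmeas r, ?_⟩
    rw [hasFiniteIntegral_iff_ofReal (hnonneg r hr)]
    calc (∫⁻ z in I, ENNReal.ofReal (f r z)) = ellE n dstar r := hlint r
      _ ≤ ENNReal.ofReal (r : ℝ) := (hKT r hr).1
      _ < ⊤ := ENNReal.ofReal_lt_top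
  have hfval : ∀ r ∈ Finset.Icc 1 (n - 1), (∫ z in I, f r z) ≤ (r : ℝ) := by
    intro r hr
    rw [integral_eq_lintegral_of_nonneg_ae (hnonneg r hr) (hmeas r), hlint r]
    calc (ellE n dstar r).toReal ≤ (ENNReal.ofReal (r:ℝ)).toReal :=
          ENNReal.toReal_mono ENNReal.ofReal_ne_top (hKT r hr).1
      _ = (r : ℝ) := ENNReal.toReal_ofReal (Nat.cast_nonneg r)
  -- the comparison function
  set h : ℝ → ℝ := fun z => ∑ r ∈ Finset.Icc 1 (n - 1), d r * f r z with hh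
  have hhint : IntegrableOn h I :=
    integrable_finset_sum _ fun r hr => (hfint r hr).const_mul (d r)
  have hhval : (∫ z in I, h z) ≤ 1 := by
    rw [hh]
    rw [integral_finset_sum _ fun r hr => (hfint r hr).const_mul (d r)]
    calc ∑ r ∈ Finset.Icc 1 (n - 1), ∫ z in I, d r * f r z
        = ∑ r ∈ Finset.Icc 1 (n - 1), d r * ∫ z in I, f r z := by
          refine Finset.sum_congr rfl fun r hr => ?_
          exact integral_const_mul _ _
      _ ≤ ∑ r ∈ Finset.Icc 1 (n - 1), d r * (r : ℝ) := by
          refine Finset.sum_le_sum fun r hr => ?_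
          exact mul_le_mul_of_nonneg_left (hfval r hr) (hd.1 r hr)
      _ = ∑ r ∈ Finset.Icc 1 (n - 1), (r : ℝ) * d r := by
          refine Finset.sum_congr rfl fun r _ => mul_comm _ _
      _ = 1 := hd.2
  -- pointwise inequality
  have hpoint : ∀ z ∈ I, Real.log (aFun n d z) ≤
      Real.log (aFun n dstar z) + (h z - 1) := by
    intro z hz
    have had : 0 < aFun n d z := aFun_pos hd hz
    have has : 0 < aFun n dstar z := aFun_pos hfeas hz
    have hratio : h z = aFun n d z / aFun n dstar z := by
      rw [hh, aFun_eq, Finset.sum_div]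
      refine Finset.sum_congr rfl fun r _ => ?_
      rw [hf]
      rw [mul_comm (cFun n r z) (d r), mul_div_assoc]
    have hlog : Real.log (aFun n d z / aFun n dstar z) ≤
        aFun n d z / aFun n dstar z - 1 :=
      Real.log_le_sub_one_of_pos (div_pos had has)
    rw [Real.log_div had.ne' has.ne'] at hlog
    rw [hratio]
    linarith
  -- integrate
  have hconst : IntegrableOn (fun _ : ℝ => (1:ℝ)) I :=
    (integrableOn_const_iff).mpr (Or.inr (by simp [hI, Real.volume_Ioo]))
  have h1int : IntegrableOn (fun z => h z - 1) I := hhint.sub hconst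
  have hFint : IntegrableOn (fun z => Real.log (aFun n dstar z) + (h z - 1)) I :=
    (integrableOn_log_aFun hfeas).add h1int
  have hone : (∫ _ in I, (1:ℝ)) = 1 := by
    rw [setIntegral_const, hI, Real.volume_real_Ioo]
    norm_num
  calc W n d = ∫ z in I, Real.log (aFun n d z) := W_eq n d
    _ ≤ ∫ z in I, (Real.log (aFun n dstar z) + (h z - 1)) :=
        setIntegral_mono_on (integrableOn_log_aFun hd) hFint measurableSet_Ioo hpoint
    _ = (∫ z in I, Real.log (aFun n dstar z)) + ((∫ z in I, h z) - ∫ _ in I, (1:ℝ)) := by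
        rw [integral_add (integrableOn_log_aFun hfeas) h1int, integral_sub hhint hconst]
    _ ≤ W n dstar := by
        rw [hone, ← W_eq]
        linarith
end
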